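/- arXiv:1703.02841 — 4 statements merged into one kernel-verified Lean document; each statement's English description precedes it below -/
import Mathlib

section
/- Let 1 < p < 2 and β > 0 with βq ≤ 1, where q = p/(p−1). If f ∈ A^1_β(𝕋) and the capacity C_{1−βq}(Z(f)) is strictly positive, then f is not cyclic in A^p_β(𝕋). -/
open MeasureTheory Real Set Filter Topology ENNReal

noncomputable section

instance : Fact (0 < 2 * Real.pi) := ⟨by positivity⟩

/-- The weighted sum `∑ ‖c n‖^p (1+|n|)^{pβ}` of a Fourier-coefficient sequence,
i.e. `‖c‖_{ℓ^p_β}^p`. -/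
def wSum (p β : ℝ) (c : ℤ → ℂ) : ℝ :=
  ∑' n : ℤ, ‖c n‖ ^ p * (1 + |(n : ℝ)|) ^ (p * β)

/-- Membership in `A^p_β(𝕋)` (equivalently `ℓ^p_β(ℤ)`), expressed via the
Fourier coefficient sequence `c`. -/
def MemA (p β : ℝ) (c : ℤ → ℂ) : Prop :=
  Summable fun n : ℤ => ‖c n‖ ^ p * (1 + |(n : ℝ)|) ^ (p * β)

/-- The `A^p_β(𝕋)` (i.e. `ℓ^p_β(ℤ)`) norm of a Fourier-coefficient sequence. -/
def normA (p β : ℝ) (c : ℤ → ℂ) : ℝ := (wSum p β c) ^ (1 / p)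

/-- The function on the circle `𝕋 = ℝ/2πℤ` whose Fourier coefficient sequence is `c`,
namely `t ↦ ∑_{n ∈ ℤ} c_n e^{int}`. -/
def fSum (c : ℤ → ℂ) (t : AddCircle (2 * Real.pi)) : ℂ :=
  ∑' n : ℤ, c n * fourier n t

/-- The zero set `Z(f)` of the function `f` with Fourier coefficients `c`. -/
def zeroSet (c : ℤ → ℂ) : Set (AddCircle (2 * Real.pi)) := {t | fSum c t = 0}

/-- Convolution of coefficient sequences: the Fourier coefficients of the product
of the corresponding functions/distributions. -/
def convSeq (a c : ℤ → ℂ) (n : ℤ) : ℂ := ∑' k : ℤ, a k * c (n - k)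

/-- Cyclicity of (the element with coefficients) `c` in `A^p_β(𝕋)`: there are
trigonometric polynomials `P` (finitely supported coefficient sequences `a`) with
`‖1 - P·f‖_{A^p_β}` arbitrarily small. -/
def IsCyclicA (p β : ℝ) (c : ℤ → ℂ) : Prop :=
  ∀ ε : ℝ, 0 < ε → ∃ a : ℤ → ℂ, (Function.support a).Finite ∧
    normA p β (fun n => (if n = 0 then 1 else 0) - convSeq a c n) < ε

/-- Fourier coefficient `μ̂(n) = ∫ e^{-int} dμ(t)` of a measure on `ℝ/2πℤ`. -/
def muHat (μ : Measure (AddCircle (2 * Real.pi))) (n : ℤ) : ℂ :=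
  ∫ t, fourier (-n) t ∂μ

/-- The `α`-energy `I_α(μ) = ∑_{n ≥ 1} |μ̂(n)|²/(1+n)^{1-α}` of `μ` is finite. -/
def HasFiniteEnergy (α : ℝ) (μ : Measure (AddCircle (2 * Real.pi))) : Prop :=
  Summable fun n : ℕ => ‖muHat μ (n + 1)‖ ^ 2 / (1 + ((n : ℝ) + 1)) ^ (1 - α)

/-- `C_α(E) = 0`: every probability measure supported on a compact subset of `E`
has infinite `α`-energy. -/
def CapacityZero (α : ℝ) (E : Set (AddCircle (2 * Real.pi))) : Prop :=
  ∀ μ : Measure (AddCircle (2 * Real.pi)), IsProbabilityMeasure μ →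
    (∃ K, K ⊆ E ∧ IsCompact K ∧ μ Kᶜ = 0) → ¬ HasFiniteEnergy α μ

/-- `C_α(E) > 0`: some probability measure supported on a compact subset of `E`
has finite `α`-energy. -/
def CapacityPos (α : ℝ) (E : Set (AddCircle (2 * Real.pi))) : Prop :=
  ∃ μ : Measure (AddCircle (2 * Real.pi)), IsProbabilityMeasure μ ∧
    (∃ K, K ⊆ E ∧ IsCompact K ∧ μ Kᶜ = 0) ∧ HasFiniteEnergy α μ

/-- The `k`-fold Minkowski sum `k × E = E + ⋯ + E`. -/
def kFold (k : ℕ) (E : Set (AddCircle (2 * Real.pi))) : Set (AddCircle (2 * Real.pi)) :=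
  {x | ∃ g : Fin k → AddCircle (2 * Real.pi), (∀ i, g i ∈ E) ∧ x = ∑ i, g i}

/-- Smoothness (`C^∞`) of a function on the circle, via its lift to `ℝ`. -/
def SmoothOnCircle (φ : AddCircle (2 * Real.pi) → ℂ) : Prop :=
  ContDiff ℝ (⊤ : ℕ∞) fun x : ℝ => φ (↑x)

/-- `supp S ⊆ E` for the distribution `S` with Fourier coefficients `s`:
`⟨S, φ⟩ = ∑ₙ Ŝ(n) φ̂(−n) = 0` for every `C^∞` function `φ` supported in `𝕋 ∖ E`. -/
def DistSuppIn (s : ℤ → ℂ) (E : Set (AddCircle (2 * Real.pi))) : Prop :=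
  ∀ φ : AddCircle (2 * Real.pi) → ℂ, SmoothOnCircle φ → tsupport φ ⊆ Eᶜ →
    ∑' n : ℤ, s n * fourierCoeff φ (-n) = 0

-- basic fourier facts
example (n : ℤ) (t : AddCircle (2*Real.pi)) : ‖fourier n t‖ = 1 := Circle.norm_coe _

lemma fourier_norm_pt (n : ℤ) (t : AddCircle (2*Real.pi)) : ‖fourier n t‖ = 1 := Circle.norm_coe _

lemma muHat_norm_le (μ : Measure (AddCircle (2*Real.pi))) [IsProbabilityMeasure μ] (n : ℤ) :
    ‖muHat μ n‖ ≤ 1 := by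
  calc ‖muHat μ n‖ ≤ ∫ t, ‖fourier (-n) t‖ ∂μ := norm_integral_le_integral_norm _
    _ = 1 := by simp [fourier_norm_pt, Circle.norm_coe]

lemma muHat_zero (μ : Measure (AddCircle (2*Real.pi))) [IsProbabilityMeasure μ] :
    muHat μ 0 = 1 := by
  simp [muHat]

lemma muHat_neg (μ : Measure (AddCircle (2*Real.pi))) (n : ℤ) :
    muHat μ (-n) = (starRingEnd ℂ) (muHat μ n) := by
  rw [muHat, muHat, ← integral_conj]
  congr 1; funext t
  rw [neg_neg, ← fourier_neg, neg_neg]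

lemma muHat_neg_norm (μ : Measure (AddCircle (2*Real.pi))) (n : ℤ) :
    ‖muHat μ (-n)‖ = ‖muHat μ n‖ := by rw [muHat_neg]; exact RCLike.norm_conj _
lemma one_le_w {e : ℝ} (he : 0 ≤ e) (n : ℤ) : (1:ℝ) ≤ (1 + |(n:ℝ)|) ^ e :=
  Real.one_le_rpow (le_add_of_nonneg_right (abs_nonneg _)) he

lemma memA_one_summable {β : ℝ} {c : ℤ → ℂ} (hc : MemA 1 β c) :
    Summable (fun n : ℤ => ‖c n‖ * (1 + |(n:ℝ)|) ^ β) := by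
  unfold MemA at hc
  simpa using hc

lemma l1_of_memA {β : ℝ} (hβ : 0 ≤ β) {c : ℤ → ℂ} (hc : MemA 1 β c) :
    Summable (fun n : ℤ => ‖c n‖) := by
  refine Summable.of_nonneg_of_le (fun n => norm_nonneg _) (fun n => ?_) (memA_one_summable hc)
  calc ‖c n‖ = ‖c n‖ * 1 := (mul_one _).symm
    _ ≤ ‖c n‖ * (1 + |(n:ℝ)|) ^ β :=
      mul_le_mul_of_nonneg_left (one_le_w hβ n) (norm_nonneg _)

lemma weight_ineq {β : ℝ} (hβ : 0 ≤ β) (n k : ℤ) :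
    (1 + |(n:ℝ)|) ^ β ≤ (1 + |((n - k : ℤ):ℝ)|) ^ β * (1 + |(k:ℝ)|) ^ β := by
  rw [← Real.mul_rpow (by positivity) (by positivity)]
  refine Real.rpow_le_rpow (by positivity) ?_ hβ
  push_cast
  have h1 : |(n:ℝ)| ≤ |(n:ℝ) - (k:ℝ)| + |(k:ℝ)| := by
    have := abs_add_le ((n:ℝ) - k) (k:ℝ); simpa using this
  nlinarith [abs_nonneg ((n:ℝ) - (k:ℝ)), abs_nonneg ((k:ℝ))]

lemma shifted_summable {β : ℝ} (hβ : 0 ≤ β) {c : ℤ → ℂ} (hc : MemA 1 β c) (k : ℤ) :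
    Summable (fun n : ℤ => ‖c (n - k)‖ * (1 + |(n:ℝ)|) ^ β) := by
  have base : Summable (fun n : ℤ => ‖c (n - k)‖ * (1 + |((n - k : ℤ):ℝ)|) ^ β) :=
    (memA_one_summable hc).comp_injective (sub_left_injective)
  refine Summable.of_nonneg_of_le (fun n => by positivity) (fun n => ?_)
    (base.mul_right ((1 + |(k:ℝ)|) ^ β))
  calc ‖c (n - k)‖ * (1 + |(n:ℝ)|) ^ β
      ≤ ‖c (n - k)‖ * ((1 + |((n - k : ℤ):ℝ)|) ^ β * (1 + |(k:ℝ)|) ^ β) :=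
        mul_le_mul_of_nonneg_left (weight_ineq hβ n k) (norm_nonneg _)
    _ = ‖c (n - k)‖ * (1 + |((n - k : ℤ):ℝ)|) ^ β * (1 + |(k:ℝ)|) ^ β := by ring
lemma conv_eq {a : ℤ → ℂ} (c : ℤ → ℂ) (ha : (Function.support a).Finite) (n : ℤ) :
    convSeq a c n = ∑ k ∈ ha.toFinset, a k * c (n - k) := by
  refine tsum_eq_sum ?_
  intro k hk
  have : a k = 0 := Function.notMem_support.mp (by simpa using hk)
  simp [this]

lemma conv_summable {β : ℝ} (hβ : 0 ≤ β) {c : ℤ → ℂ} (hc : MemA 1 β c)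
    {a : ℤ → ℂ} (ha : (Function.support a).Finite) :
    Summable (fun n : ℤ => ‖convSeq a c n‖ * (1 + |(n:ℝ)|) ^ β) := by
  have hsum : Summable (fun n : ℤ =>
      ∑ k ∈ ha.toFinset, ‖a k‖ * (‖c (n - k)‖ * (1 + |(n:ℝ)|) ^ β)) :=
    summable_sum (fun k _ => (shifted_summable hβ hc k).mul_left ‖a k‖)
  refine Summable.of_nonneg_of_le (fun n => by positivity) (fun n => ?_) hsum
  rw [conv_eq c ha n]
  calc ‖∑ k ∈ ha.toFinset, a k * c (n - k)‖ * (1 + |(n:ℝ)|) ^ β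
      ≤ (∑ k ∈ ha.toFinset, ‖a k * c (n - k)‖) * (1 + |(n:ℝ)|) ^ β := by
        refine mul_le_mul_of_nonneg_right (norm_sum_le _ _) (by positivity)
    _ = ∑ k ∈ ha.toFinset, ‖a k‖ * (‖c (n - k)‖ * (1 + |(n:ℝ)|) ^ β) := by
        rw [Finset.sum_mul]; refine Finset.sum_congr rfl (fun k _ => ?_)
        rw [norm_mul]; ring

lemma d_summable {β : ℝ} (hβ : 0 ≤ β) {c : ℤ → ℂ} (hc : MemA 1 β c)
    {a : ℤ → ℂ} (ha : (Function.support a).Finite) :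
    Summable (fun n : ℤ =>
      ‖(if n = 0 then (1:ℂ) else 0) - convSeq a c n‖ * (1 + |(n:ℝ)|) ^ β) := by
  have h1 : Summable (fun n : ℤ =>
      (if n = 0 then (1:ℝ) else 0) * (1 + |(n:ℝ)|) ^ β) := by
    refine summable_of_ne_finset_zero (s := {0}) (fun n hn => ?_)
    simp at hn; simp [hn]
  refine Summable.of_nonneg_of_le (fun n => by positivity) (fun n => ?_)
    (h1.add (conv_summable hβ hc ha))
  have hnorm : ‖(if n = 0 then (1:ℂ) else 0) - convSeq a c n‖
      ≤ (if n = 0 then (1:ℝ) else 0) + ‖convSeq a c n‖ := by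
    refine (norm_sub_le _ _).trans ?_
    gcongr
    split <;> simp
  calc ‖(if n = 0 then (1:ℂ) else 0) - convSeq a c n‖ * (1 + |(n:ℝ)|) ^ β
      ≤ ((if n = 0 then (1:ℝ) else 0) + ‖convSeq a c n‖) * (1 + |(n:ℝ)|) ^ β :=
        mul_le_mul_of_nonneg_right hnorm (by positivity)
    _ = (if n = 0 then (1:ℝ) else 0) * (1 + |(n:ℝ)|) ^ β
        + ‖convSeq a c n‖ * (1 + |(n:ℝ)|) ^ β := by ring

lemma l1_to_lp {p : ℝ} (hp : 1 ≤ p) {h : ℤ → ℝ} (h0 : ∀ n, 0 ≤ h n) (hs : Summable h) :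
    Summable (fun n => h n ^ p) := by
  set C := ∑' m, h m with hCdef
  have hC : ∀ n, h n ≤ C := fun n => hs.le_tsum n (fun m _ => h0 m)
  have hC0 : 0 ≤ C := tsum_nonneg h0
  refine Summable.of_nonneg_of_le (fun n => Real.rpow_nonneg (h0 n) p)
      (fun n => ?_) (hs.mul_left (C ^ (p-1)))
  calc h n ^ p = h n ^ ((p - 1) + 1) := by ring_nf
    _ = h n ^ (p - 1) * h n ^ (1:ℝ) := Real.rpow_add' (h0 n) (by simp; linarith)
    _ = h n ^ (p - 1) * h n := by rw [Real.rpow_one]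
    _ ≤ C ^ (p - 1) * h n :=
        mul_le_mul_of_nonneg_right (Real.rpow_le_rpow (h0 n) (hC n) (by linarith)) (h0 n)
lemma rpow_le_two_pow {x : ℝ} (h0 : 0 ≤ x) (h1 : x ≤ 1) {q : ℝ} (hq : 2 ≤ q) :
    x ^ q ≤ x ^ 2 := by
  rcases h0.eq_or_lt with h | h
  · rw [← h, Real.zero_rpow (by linarith)]
    positivity
  · calc x ^ q ≤ x ^ (2:ℝ) := Real.rpow_le_rpow_of_exponent_ge h h1 hq
      _ = x ^ 2 := by rw [← Real.rpow_natCast x 2]; norm_num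

lemma g_summable {q β : ℝ} (hq2 : 2 ≤ q) (hβ : 0 < β)
    (μ : Measure (AddCircle (2*Real.pi))) [IsProbabilityMeasure μ]
    (hE : HasFiniteEnergy (1 - β * q) μ) :
    Summable (fun n : ℤ => ‖muHat μ (-n)‖ ^ q * (1 + |(n:ℝ)|) ^ (-(β * q))) := by
  unfold HasFiniteEnergy at hE
  have hE' : Summable (fun n : ℕ =>
      ‖muHat μ ((n:ℤ) + 1)‖ ^ 2 * (1 + ((n : ℝ) + 1)) ^ (-(β * q))) := by
    refine hE.congr (fun n => ?_)
    rw [div_eq_mul_inv, ← Real.rpow_neg (by positivity)]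
    ring_nf
  have key : ∀ m : ℤ, ‖muHat μ (-m)‖ ^ q ≤ ‖muHat μ m‖ ^ 2 := fun m => by
    rw [muHat_neg_norm]
    exact rpow_le_two_pow (norm_nonneg _) (muHat_norm_le μ m) hq2
  have hnat : Summable (fun n : ℕ => ‖muHat μ (-((n:ℤ)))‖ ^ q * (1 + (n:ℝ)) ^ (-(β * q))) := by
    rw [← summable_nat_add_iff 1]
    refine Summable.of_nonneg_of_le (fun n => by positivity) (fun n => ?_) hE'
    have h1 : ((n + 1 : ℕ) : ℤ) = (n:ℤ) + 1 := by push_cast; ring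
    have h2 : ((n + 1 : ℕ) : ℝ) = (n:ℝ) + 1 := by push_cast; ring
    rw [h1, h2]
    exact mul_le_mul_of_nonneg_right (key ((n:ℤ)+1)) (by positivity)
  refine Summable.of_nat_of_neg_add_one ?_ ?_
  · refine hnat.congr (fun n => ?_)
    rw [abs_of_nonneg (by positivity : (0:ℝ) ≤ ((n:ℤ):ℝ))]
    norm_num
  · have hshift := (summable_nat_add_iff 1).2 hnat
    refine hshift.congr (fun n => ?_)
    have h1 : (-((n:ℤ) + 1)) = -(((n+1:ℕ)):ℤ) := by push_cast; ring
    have h2 : |((-((n:ℤ)+1)):ℝ)| = 1 + (((n+1:ℕ)):ℝ) - 1 := by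
      push_cast; rw [abs_neg, abs_of_nonneg (by positivity)]; ring
    rw [neg_neg, muHat_neg_norm]
    have h3 : ((-(↑n + 1) : ℤ) : ℝ) = -((n:ℝ)+1) := by push_cast; ring
    rw [h3, abs_neg, abs_of_nonneg (by positivity)]
    push_cast
    ring_nf
lemma fourier_nnnorm (m : ℤ) (t : AddCircle (2*Real.pi)) : ‖fourier m t‖₊ = 1 := by
  ext
  simp [fourier_norm_pt m t, Circle.norm_coe]

lemma sum_c_muHat {β : ℝ} (hβ : 0 ≤ β) {c : ℤ → ℂ} (hc : MemA 1 β c)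
    (μ : Measure (AddCircle (2*Real.pi))) [IsProbabilityMeasure μ] (k : ℤ) :
    ∑' m : ℤ, c m * muHat μ (-(m + k)) = ∫ t, fourier k t * fSum c t ∂μ := by
  have hc1 : Summable (fun n : ℤ => ‖c n‖) := l1_of_memA hβ hc
  have hmeas : ∀ m : ℤ, AEStronglyMeasurable (fun t => c m * fourier (m + k) t) μ :=
    fun m => (continuous_const.mul (map_continuous (fourier (m+k)))).aestronglyMeasurable
  have hlint : ∀ m : ℤ, ∫⁻ t, ‖c m * fourier (m + k) t‖₊ ∂μ = (‖c m‖₊ : ℝ≥0∞) := by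
    intro m
    have : (fun t : AddCircle (2*Real.pi) => (‖c m * fourier (m + k) t‖₊ : ℝ≥0∞)) = fun _ => (‖c m‖₊ : ℝ≥0∞) := by
      funext t
      rw [nnnorm_mul, fourier_nnnorm, mul_one]
    rw [this, lintegral_const, measure_univ, mul_one]
  have hfin : ∑' m : ℤ, ∫⁻ t, ‖c m * fourier (m + k) t‖₊ ∂μ ≠ ∞ := by
    rw [tsum_congr hlint]
    refine ENNReal.tsum_coe_ne_top_iff_summable.2 ?_
    rw [← NNReal.summable_coe]
    simpa [coe_nnnorm] using hc1
  have h1 : ∀ m : ℤ, c m * muHat μ (-(m + k)) = ∫ t, c m * fourier (m + k) t ∂μ := by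
    intro m
    rw [muHat, neg_neg, integral_const_mul]
  rw [tsum_congr h1, ← integral_tsum hmeas hfin]
  congr 1
  funext t
  calc ∑' m : ℤ, c m * fourier (m + k) t
      = ∑' m : ℤ, fourier k t * (c m * fourier m t) := by
        refine tsum_congr (fun m => ?_)
        rw [fourier_add]; ring
    _ = fourier k t * fSum c t := by rw [tsum_mul_left]; rfl
lemma integral_fourier_mul_fSum_eq_zero {c : ℤ → ℂ}
    (μ : Measure (AddCircle (2*Real.pi))) {K : Set (AddCircle (2*Real.pi))}
    (hK : K ⊆ zeroSet c) (hK0 : μ Kᶜ = 0) (k : ℤ) :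
    ∫ t, fourier k t * fSum c t ∂μ = 0 := by
  have hae : (fun t => fourier k t * fSum c t) =ᵐ[μ] 0 := by
    rw [Filter.EventuallyEq, ae_iff]
    refine measure_mono_null (fun t ht => ?_) hK0
    simp only [Set.mem_setOf_eq, Pi.zero_apply] at ht
    intro htK
    exact ht (by rw [hK htK, mul_zero])
  rw [integral_congr_ae hae]; simp

lemma pairing_eq_one {β : ℝ} (hβ : 0 ≤ β) {c : ℤ → ℂ} (hc : MemA 1 β c)
    (μ : Measure (AddCircle (2*Real.pi))) [IsProbabilityMeasure μ]
    {K : Set (AddCircle (2*Real.pi))} (hK : K ⊆ zeroSet c) (hK0 : μ Kᶜ = 0)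
    {a : ℤ → ℂ} (ha : (Function.support a).Finite) :
    ∑' n : ℤ, ((if n = 0 then (1:ℂ) else 0) - convSeq a c n) * muHat μ (-n) = 1 := by
  have hc1 : Summable (fun n : ℤ => ‖c n‖) := l1_of_memA hβ hc
  -- summability of each piece
  have hs1 : Summable (fun n : ℤ => (if n = 0 then (1:ℂ) else 0) * muHat μ (-n)) := by
    refine summable_of_ne_finset_zero (s := {0}) (fun n hn => ?_)
    simp at hn; simp [hn]
  have hs2 : Summable (fun n : ℤ => convSeq a c n * muHat μ (-n)) := by
    refine Summable.of_norm ?_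
    refine Summable.of_nonneg_of_le (fun n => norm_nonneg _) (fun n => ?_)
      ((conv_summable hβ hc ha).congr (fun n => rfl))
    rw [norm_mul]
    calc ‖convSeq a c n‖ * ‖muHat μ (-n)‖ ≤ ‖convSeq a c n‖ * 1 :=
          mul_le_mul_of_nonneg_left (muHat_norm_le μ (-n)) (norm_nonneg _)
      _ = ‖convSeq a c n‖ * 1 := rfl
      _ ≤ ‖convSeq a c n‖ * (1 + |(n:ℝ)|) ^ β := by
          rw [mul_one]
          nth_rewrite 1 [← mul_one ‖convSeq a c n‖]
          exact mul_le_mul_of_nonneg_left (one_le_w hβ n) (norm_nonneg _)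
  -- split the sum
  have hsplit : ∑' n : ℤ, ((if n = 0 then (1:ℂ) else 0) - convSeq a c n) * muHat μ (-n)
      = (∑' n : ℤ, (if n = 0 then (1:ℂ) else 0) * muHat μ (-n))
        - ∑' n : ℤ, convSeq a c n * muHat μ (-n) := by
    rw [← hs1.tsum_sub hs2]
    exact tsum_congr (fun n => by ring)
  -- first sum is 1
  have hfirst : ∑' n : ℤ, (if n = 0 then (1:ℂ) else 0) * muHat μ (-n) = 1 := by
    rw [tsum_eq_single 0 (fun n hn => by simp [hn])]
    simp [muHat_zero]
  -- second sum is 0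
  have hsecond : ∑' n : ℤ, convSeq a c n * muHat μ (-n) = 0 := by
    have hterm : ∀ n : ℤ, convSeq a c n * muHat μ (-n)
        = ∑ k ∈ ha.toFinset, a k * c (n - k) * muHat μ (-n) := by
      intro n; rw [conv_eq c ha n, Finset.sum_mul]
    rw [tsum_congr hterm]
    have hksum : ∀ k : ℤ, Summable (fun n : ℤ => a k * c (n - k) * muHat μ (-n)) := by
      intro k
      refine Summable.of_norm ?_
      have hbase : Summable (fun n : ℤ => ‖a k‖ * ‖c (n - k)‖) :=
        (hc1.comp_injective (sub_left_injective)).mul_left _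
      refine Summable.of_nonneg_of_le (fun n => norm_nonneg _) (fun n => ?_) hbase
      rw [norm_mul, norm_mul]
      calc ‖a k‖ * ‖c (n - k)‖ * ‖muHat μ (-n)‖ ≤ ‖a k‖ * ‖c (n - k)‖ * 1 :=
            mul_le_mul_of_nonneg_left (muHat_norm_le μ (-n)) (by positivity)
        _ = ‖a k‖ * ‖c (n - k)‖ := mul_one _
    rw [Summable.tsum_finsetSum (fun k _ => hksum k)]
    refine Finset.sum_eq_zero (fun k _ => ?_)
    have h1 : ∑' n : ℤ, a k * c (n - k) * muHat μ (-n)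
        = a k * ∑' n : ℤ, c (n - k) * muHat μ (-n) := by
      rw [← tsum_mul_left]
      exact tsum_congr (fun n => by ring)
    rw [h1]
    have h2 : ∑' n : ℤ, c (n - k) * muHat μ (-n)
        = ∑' m : ℤ, c m * muHat μ (-(m + k)) := by
      rw [← (Equiv.addRight k).tsum_eq (fun n => c (n - k) * muHat μ (-n))]
      exact tsum_congr (fun m => by simp)
    rw [h2, sum_c_muHat hβ hc μ k, integral_fourier_mul_fSum_eq_zero μ hK hK0 k, mul_zero]
  rw [hsplit, hfirst, hsecond, sub_zero]

/-- Theorem 3.3(2): if `1 < p < 2`, `β > 0`, `βq ≤ 1` where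
`q = p/(p-1)`, `f ∈ A^1_β(𝕋)` and `C_{1-βq}(Z(f)) > 0`, then `f` is not cyclic
in `A^p_β(𝕋)`. -/
theorem stmt1 (p q β : ℝ) (hp1 : 1 < p) (hp2 : p < 2) (hβ : 0 < β)
    (hq : q = p / (p - 1)) (hβq : β * q ≤ 1)
    (c : ℤ → ℂ) (hc : MemA 1 β c)
    (hcap : CapacityPos (1 - β * q) (zeroSet c)) :
    ¬ IsCyclicA p β c := by
  obtain ⟨μ, hprob, ⟨K, hKE, hKc, hK0⟩, hE⟩ := hcap
  haveI := hprob
  intro hcyc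
  have hβ0 : (0:ℝ) ≤ β := hβ.le
  have hpm1 : (0:ℝ) < p - 1 := by linarith
  have hq2 : 2 ≤ q := by
    rw [hq, le_div_iff₀ hpm1]; linarith
  have hpq : p.HolderConjugate q := hq ▸ Real.HolderConjugate.conjExponent hp1
  have hq0 : 0 < q := by linarith
  -- summability of the q-part
  have hg := g_summable hq2 hβ μ hE
  have hgq : Summable (fun n : ℤ => (‖muHat μ (-n)‖ * (1 + |(n:ℝ)|) ^ (-β)) ^ q) := by
    refine hg.congr (fun n => ?_)
    rw [Real.mul_rpow (norm_nonneg _) (Real.rpow_nonneg (by positivity) _),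
      ← Real.rpow_mul (by positivity), neg_mul]
  set M : ℝ := (∑' n : ℤ, (‖muHat μ (-n)‖ * (1 + |(n:ℝ)|) ^ (-β)) ^ q) ^ (1/q) with hMdef
  have hM0 : 0 ≤ M := Real.rpow_nonneg (tsum_nonneg (fun n => by positivity)) _
  have hε : (0:ℝ) < 1 / (M + 1) := by positivity
  obtain ⟨a, ha, hnorm⟩ := hcyc (1 / (M + 1)) hε
  set d : ℤ → ℂ := fun n => (if n = 0 then (1:ℂ) else 0) - convSeq a c n with hddef
  -- summability of the p-part
  have hd1 : Summable (fun n : ℤ => ‖d n‖ * (1 + |(n:ℝ)|) ^ β) := d_summable hβ0 hc ha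
  have hfp : Summable (fun n : ℤ => (‖d n‖ * (1 + |(n:ℝ)|) ^ β) ^ p) :=
    l1_to_lp hp1.le (fun n => by positivity) hd1
  -- Hölder
  obtain ⟨hsum_fg, hle⟩ := summable_and_inner_le_Lp_mul_Lq_tsum_of_nonneg hpq
    (f := fun n : ℤ => ‖d n‖ * (1 + |(n:ℝ)|) ^ β)
    (g := fun n : ℤ => ‖muHat μ (-n)‖ * (1 + |(n:ℝ)|) ^ (-β))
    (fun n => by positivity) (fun n => by positivity) hfp hgq
  have hcancel : ∀ n : ℤ, (1 + |(n:ℝ)|) ^ β * (1 + |(n:ℝ)|) ^ (-β) = 1 := fun n => by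
    rw [← Real.rpow_add (by positivity), add_neg_cancel, Real.rpow_zero]
  have hfg : ∀ n : ℤ, (‖d n‖ * (1 + |(n:ℝ)|) ^ β) * (‖muHat μ (-n)‖ * (1 + |(n:ℝ)|) ^ (-β))
      = ‖d n * muHat μ (-n)‖ := by
    intro n
    rw [norm_mul]
    calc (‖d n‖ * (1 + |(n:ℝ)|) ^ β) * (‖muHat μ (-n)‖ * (1 + |(n:ℝ)|) ^ (-β))
        = (‖d n‖ * ‖muHat μ (-n)‖) * ((1 + |(n:ℝ)|) ^ β * (1 + |(n:ℝ)|) ^ (-β)) := by ring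
      _ = ‖d n‖ * ‖muHat μ (-n)‖ := by rw [hcancel n, mul_one]
  -- the pairing equals 1
  have hpair : ∑' n : ℤ, d n * muHat μ (-n) = 1 :=
    pairing_eq_one hβ0 hc μ hKE hK0 ha
  -- 1 ≤ tsum of norms
  have hsum_norm : Summable (fun n : ℤ => ‖d n * muHat μ (-n)‖) :=
    hsum_fg.congr hfg
  have h1le : (1:ℝ) ≤ ∑' n : ℤ, (‖d n‖ * (1 + |(n:ℝ)|) ^ β) * (‖muHat μ (-n)‖ * (1 + |(n:ℝ)|) ^ (-β)) := by
    have := norm_tsum_le_tsum_norm hsum_norm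
    rw [hpair] at this
    simp only [norm_one] at this
    calc (1:ℝ) ≤ ∑' n : ℤ, ‖d n * muHat μ (-n)‖ := this
      _ = _ := (tsum_congr hfg).symm
  -- identify the p-factor with normA
  have hwsum : wSum p β d = ∑' n : ℤ, (‖d n‖ * (1 + |(n:ℝ)|) ^ β) ^ p := by
    refine tsum_congr (fun n => ?_)
    rw [Real.mul_rpow (norm_nonneg _) (Real.rpow_nonneg (by positivity) _),
      ← Real.rpow_mul (by positivity), mul_comm β p]
  have hnormA : normA p β d = (∑' n : ℤ, (‖d n‖ * (1 + |(n:ℝ)|) ^ β) ^ p) ^ (1/p) := by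
    rw [normA, hwsum]
  have hfinal : (1:ℝ) ≤ normA p β d * M := by
    rw [hnormA, hMdef]
    exact h1le.trans hle
  have hA0 : 0 ≤ normA p β d := Real.rpow_nonneg (tsum_nonneg (fun n => by positivity)) _
  have : normA p β d * M ≤ (1 / (M + 1)) * M :=
    mul_le_mul_of_nonneg_right hnorm.le hM0
  have hlt : (1 / (M + 1)) * M < 1 := by
    rw [div_mul_eq_mul_div, one_mul, div_lt_one (by linarith)]
    linarith
  linarith


end
end

section
/- Let 1 < p < ∞, β ≥ 0, q = p/(p−1), and f ∈ A^1_β(𝕋). If there exists a nonzero complex Borel measure μ on 𝕋 whose Fourier coefficients μ̂(n) = ∫_𝕋 e^{−int} dμ(t) satisfy ∑_{n∈ℤ} |μ̂(n)|^q (1+|n|)^{−qβ} < ∞ and whose support is contained in Z(f), then f is not cyclic in A^p_β(𝕋). -/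
open MeasureTheory Real Set Filter Topology ENNReal

noncomputable section

namespace Stmt9Aux

lemma norm_fourier_pt (n : ℤ) (t : AddCircle (2 * Real.pi)) : ‖(fourier n t : ℂ)‖ = 1 := by
  rw [fourier_apply]
  exact Circle.norm_coe _

lemma base_abs (x y : ℝ) : 1 + |x + y| ≤ (1 + |x|) * (1 + |y|) := by
  nlinarith [abs_add_le x y, abs_nonneg x, abs_nonneg y, mul_nonneg (abs_nonneg x) (abs_nonneg y)]

lemma one_le_base (n : ℤ) : (1 : ℝ) ≤ 1 + |(n : ℝ)| := le_add_of_nonneg_right (abs_nonneg _)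

lemma base_pos (n : ℤ) : (0 : ℝ) < 1 + |(n : ℝ)| := lt_of_lt_of_le one_pos (one_le_base n)

lemma w_pos (β : ℝ) (n : ℤ) : 0 < (1 + |(n : ℝ)|) ^ β := Real.rpow_pos_of_pos (base_pos n) β

lemma one_le_w {β : ℝ} (hβ : 0 ≤ β) (n : ℤ) : 1 ≤ (1 + |(n : ℝ)|) ^ β :=
  Real.one_le_rpow (one_le_base n) hβ

lemma summable_norm_of_memA1 {β : ℝ} (hβ : 0 ≤ β) {c : ℤ → ℂ} (hc : MemA 1 β c) :
    Summable fun n : ℤ => ‖c n‖ := by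
  refine Summable.of_nonneg_of_le (fun n => norm_nonneg _) (fun n => ?_) hc
  calc ‖c n‖ = ‖c n‖ ^ (1 : ℝ) * 1 := by rw [Real.rpow_one, mul_one]
    _ ≤ ‖c n‖ ^ (1 : ℝ) * (1 + |(n : ℝ)|) ^ (1 * β) := by
        apply mul_le_mul_of_nonneg_left _ (Real.rpow_nonneg (norm_nonneg _) _)
        rw [one_mul]; exact one_le_w hβ n

lemma memA1_weighted {β : ℝ} {c : ℤ → ℂ} (hc : MemA 1 β c) :
    Summable fun n : ℤ => ‖c n‖ * (1 + |(n : ℝ)|) ^ β := by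
  have h := hc
  rw [MemA] at h
  simpa [Real.rpow_one, one_mul] using h

lemma norm_muHat_le (μ : Measure (AddCircle (2 * Real.pi))) [IsFiniteMeasure μ] (n : ℤ) :
    ‖muHat μ n‖ ≤ (μ Set.univ).toReal := by
  rw [muHat]
  calc ‖∫ t, (fourier (-n) t : ℂ) ∂μ‖ ≤ ∫ t, ‖(fourier (-n) t : ℂ)‖ ∂μ :=
        norm_integral_le_integral_norm _
    _ = ∫ _t, (1 : ℝ) ∂μ := by
        congr 1; funext t; exact norm_fourier_pt _ _
    _ = (μ Set.univ).toReal := by simp; rfl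

/-- Key vanishing lemma: if `μ` is a finite measure supported on `Z(f)` and `c ∈ ℓ¹`,
then `∑ c j μ̂(l-j) = 0`. -/
lemma vanish {c : ℤ → ℂ} (hc1 : Summable fun n : ℤ => ‖c n‖)
    (μ : Measure (AddCircle (2 * Real.pi))) [IsFiniteMeasure μ]
    (hs : μ (zeroSet c)ᶜ = 0) (l : ℤ) :
    ∑' j : ℤ, c j * muHat μ (l - j) = 0 := by
  have hterm : ∀ j : ℤ, c j * muHat μ (l - j) = ∫ t, c j * fourier (j - l) t ∂μ := by
    intro j
    rw [muHat, neg_sub, ← integral_const_mul]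
  have hmeas : ∀ j : ℤ, AEStronglyMeasurable (fun t => c j * fourier (j - l) t) μ :=
    fun j => (Continuous.aestronglyMeasurable (continuous_const.mul (map_continuous _)))
  have hnn : ∀ (j : ℤ) (t : AddCircle (2 * Real.pi)),
      (‖c j * fourier (j - l) t‖₊ : ℝ≥0∞) = (‖c j‖₊ : ℝ≥0∞) := by
    intro j t
    have : ‖c j * fourier (j - l) t‖ = ‖c j‖ := by
      rw [norm_mul, norm_fourier_pt, mul_one]
    exact ENNReal.coe_inj.2 (NNReal.coe_injective (by simpa [coe_nnnorm] using this))
  have hlint : ∑' j : ℤ, ∫⁻ t, ‖c j * fourier (j - l) t‖₊ ∂μ ≠ ⊤ := by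
    have heq : ∀ j : ℤ, ∫⁻ t, ‖c j * fourier (j - l) t‖₊ ∂μ = (‖c j‖₊ : ℝ≥0∞) * μ Set.univ := by
      intro j
      calc ∫⁻ t, (‖c j * fourier (j - l) t‖₊ : ℝ≥0∞) ∂μ
          = ∫⁻ _t, (‖c j‖₊ : ℝ≥0∞) ∂μ := by
            congr 1; funext t; exact hnn j t
        _ = (‖c j‖₊ : ℝ≥0∞) * μ Set.univ := lintegral_const _
    rw [tsum_congr heq, ENNReal.tsum_mul_right]
    refine ENNReal.mul_ne_top ?_ (measure_ne_top μ _)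
    rw [ENNReal.tsum_coe_ne_top_iff_summable]
    exact NNReal.summable_coe.1 (by simpa [coe_nnnorm] using hc1)
  calc ∑' j : ℤ, c j * muHat μ (l - j)
      = ∑' j : ℤ, ∫ t, c j * fourier (j - l) t ∂μ := tsum_congr hterm
    _ = ∫ t, ∑' j : ℤ, c j * fourier (j - l) t ∂μ := (integral_tsum hmeas hlint).symm
    _ = ∫ t, fSum c t * fourier (-l) t ∂μ := by
        congr 1; funext t
        have h1 : ∀ j : ℤ, c j * fourier (j - l) t = (c j * fourier j t) * fourier (-l) t := by
          intro j
          rw [show (j - l : ℤ) = j + (-l) by ring, fourier_add, mul_assoc]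
        rw [tsum_congr h1, tsum_mul_right, fSum]
    _ = 0 := by
        apply integral_eq_zero_of_ae
        have hae : ∀ᵐ t ∂μ, t ∈ zeroSet c := by
          rw [ae_iff]
          exact hs
        filter_upwards [hae] with t ht
        simp [show fSum c t = 0 from ht]

lemma summable_mul_muHat {c : ℤ → ℂ} (hc1 : Summable fun n : ℤ => ‖c n‖)
    (μ : Measure (AddCircle (2 * Real.pi))) [IsFiniteMeasure μ] (l : ℤ) :
    Summable fun j : ℤ => c j * muHat μ (l - j) := by
  apply Summable.of_norm
  refine Summable.of_nonneg_of_le (fun j => norm_nonneg _) (fun j => ?_)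
    (hc1.mul_right (μ Set.univ).toReal)
  rw [norm_mul]
  exact mul_le_mul_of_nonneg_left (norm_muHat_le μ _) (norm_nonneg _)

/-- Combined vanishing: `∑ c j M(l-j) = 0` for the complex measure `M`. -/
lemma vanishM {c : ℤ → ℂ} (hc1 : Summable fun n : ℤ => ‖c n‖)
    (μ₁ μ₂ μ₃ μ₄ : Measure (AddCircle (2 * Real.pi)))
    [IsFiniteMeasure μ₁] [IsFiniteMeasure μ₂] [IsFiniteMeasure μ₃] [IsFiniteMeasure μ₄]
    (hs1 : μ₁ (zeroSet c)ᶜ = 0) (hs2 : μ₂ (zeroSet c)ᶜ = 0)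
    (hs3 : μ₃ (zeroSet c)ᶜ = 0) (hs4 : μ₄ (zeroSet c)ᶜ = 0) (l : ℤ) :
    ∑' j : ℤ, c j * (muHat μ₁ (l - j) - muHat μ₂ (l - j)
      + Complex.I * (muHat μ₃ (l - j) - muHat μ₄ (l - j))) = 0 := by
  have h1 := summable_mul_muHat hc1 μ₁ l
  have h2 := summable_mul_muHat hc1 μ₂ l
  have h3 := summable_mul_muHat hc1 μ₃ l
  have h4 := summable_mul_muHat hc1 μ₄ l
  have hterm : ∀ j : ℤ, c j * (muHat μ₁ (l - j) - muHat μ₂ (l - j)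
      + Complex.I * (muHat μ₃ (l - j) - muHat μ₄ (l - j)))
      = (c j * muHat μ₁ (l - j) - c j * muHat μ₂ (l - j))
        + (Complex.I * (c j * muHat μ₃ (l - j)) - Complex.I * (c j * muHat μ₄ (l - j))) := by
    intro j; ring
  rw [tsum_congr hterm,
    Summable.tsum_add (h1.sub h2) ((h3.mul_left Complex.I).sub (h4.mul_left Complex.I)),
    Summable.tsum_sub h1 h2, Summable.tsum_sub (h3.mul_left Complex.I) (h4.mul_left Complex.I),
    tsum_mul_left, tsum_mul_left, vanish hc1 μ₁ hs1 l, vanish hc1 μ₂ hs2 l,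
    vanish hc1 μ₃ hs3 l, vanish hc1 μ₄ hs4 l]
  ring

lemma l1_to_lp {u : ℤ → ℝ} (hu0 : ∀ n, 0 ≤ u n) (hu : Summable u) {p : ℝ} (hp : 1 < p) :
    Summable fun n => u n ^ p := by
  set A := ∑' n, u n with hA
  refine Summable.of_nonneg_of_le (fun n => Real.rpow_nonneg (hu0 n) p) (fun n => ?_)
    (hu.mul_left (A ^ (p - 1)))
  have hun : u n ≤ A := Summable.le_tsum hu n (fun m _ => hu0 m)
  have hsplit : u n ^ p = u n ^ (p - 1) * u n := by
    have h := Real.rpow_add' (hu0 n) (show (p - 1) + 1 ≠ 0 by rw [sub_add_cancel]; positivity)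
    rw [sub_add_cancel, Real.rpow_one] at h
    exact h
  rw [hsplit]
  exact mul_le_mul_of_nonneg_right
    (Real.rpow_le_rpow (hu0 n) hun (by linarith)) (hu0 n)

lemma inv_le_mul_inv {A B C : ℝ} (hA : 0 < A) (hB : 0 < B) (h : A ≤ C * B) :
    B⁻¹ ≤ C * A⁻¹ := by
  have hC : 0 ≤ C := nonneg_of_mul_nonneg_left (lt_of_lt_of_le hA h).le hB
  calc B⁻¹ = A * (A⁻¹ * B⁻¹) := by field_simp
    _ ≤ (C * B) * (A⁻¹ * B⁻¹) := by
        apply mul_le_mul_of_nonneg_right h (by positivity)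
    _ = C * A⁻¹ * (B * B⁻¹) := by ring
    _ = C * A⁻¹ := by rw [mul_inv_cancel₀ hB.ne', mul_one]

end Stmt9Aux

/-- Proposition 2.6(2): let `1 < p < ∞`, `β ≥ 0`,
`q = p/(p-1)`, and `f ∈ A^1_β(𝕋)`. If there is a nonzero complex Borel measure
`μ` on `𝕋` (written as `μ = μ₁ - μ₂ + i(μ₃ - μ₄)` with `μᵢ` finite positive
measures) supported in `Z(f)` and with `(μ̂(n)) ∈ ℓ^q_{-β}(ℤ)`, then `f` is not
cyclic in `A^p_β(𝕋)`. -/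
theorem stmt9 (p q β : ℝ) (hp : 1 < p) (hq : q = p / (p - 1)) (hβ : 0 ≤ β)
    (c : ℤ → ℂ) (hc : MemA 1 β c)
    (μ₁ μ₂ μ₃ μ₄ : Measure (AddCircle (2 * Real.pi)))
    (hf1 : IsFiniteMeasure μ₁) (hf2 : IsFiniteMeasure μ₂)
    (hf3 : IsFiniteMeasure μ₃) (hf4 : IsFiniteMeasure μ₄)
    (hs1 : μ₁ (zeroSet c)ᶜ = 0) (hs2 : μ₂ (zeroSet c)ᶜ = 0)
    (hs3 : μ₃ (zeroSet c)ᶜ = 0) (hs4 : μ₄ (zeroSet c)ᶜ = 0)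
    (hne : ∃ n : ℤ,
      muHat μ₁ n - muHat μ₂ n + Complex.I * (muHat μ₃ n - muHat μ₄ n) ≠ 0)
    (hsum : MemA q (-β)
      (fun n => muHat μ₁ n - muHat μ₂ n + Complex.I * (muHat μ₃ n - muHat μ₄ n))) :
    ¬ IsCyclicA p β c := by
  intro hcyc
  haveI := hf1; haveI := hf2; haveI := hf3; haveI := hf4
  set M : ℤ → ℂ := fun n => muHat μ₁ n - muHat μ₂ n + Complex.I * (muHat μ₃ n - muHat μ₄ n)
    with hMdef
  obtain ⟨n₀, hn₀⟩ := hne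
  have hn₀' : 0 < ‖M n₀‖ := norm_pos_iff.2 hn₀
  have hpq : p.HolderConjugate q := (Real.holderConjugate_iff_eq_conjExponent hp).2 hq
  have hq1 : 1 < q := hpq.symm.lt
  have hp0 : (0:ℝ) < p := lt_trans one_pos hp
  have hq0 : (0:ℝ) < q := lt_trans one_pos hq1
  have hc1 : Summable fun n : ℤ => ‖c n‖ := Stmt9Aux.summable_norm_of_memA1 hβ hc
  have hc1w : Summable fun n : ℤ => ‖c n‖ * (1 + |(n : ℝ)|) ^ β := Stmt9Aux.memA1_weighted hc
  -- uniform bound on M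
  set B : ℝ := (μ₁ Set.univ).toReal + (μ₂ Set.univ).toReal
      + (μ₃ Set.univ).toReal + (μ₄ Set.univ).toReal with hBdef
  have hMB : ∀ n : ℤ, ‖M n‖ ≤ B := by
    intro n
    have h1 := Stmt9Aux.norm_muHat_le μ₁ n
    have h2 := Stmt9Aux.norm_muHat_le μ₂ n
    have h3 := Stmt9Aux.norm_muHat_le μ₃ n
    have h4 := Stmt9Aux.norm_muHat_le μ₄ n
    calc ‖M n‖ ≤ ‖muHat μ₁ n - muHat μ₂ n‖ + ‖Complex.I * (muHat μ₃ n - muHat μ₄ n)‖ :=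
          norm_add_le _ _
      _ ≤ (‖muHat μ₁ n‖ + ‖muHat μ₂ n‖) + (‖muHat μ₃ n‖ + ‖muHat μ₄ n‖) := by
          rw [norm_mul, Complex.norm_I, one_mul]
          exact add_le_add (norm_sub_le _ _) (norm_sub_le _ _)
      _ ≤ B := by rw [hBdef]; linarith
  -- shifted q-summability of M
  have hsum' : Summable fun n : ℤ =>
      ‖M (n₀ - n)‖ ^ q * (1 + |((n₀ - n : ℤ) : ℝ)|) ^ (q * (-β)) := by
    have h := (Equiv.subLeft n₀).summable_iff
      (f := fun n : ℤ => ‖M n‖ ^ q * (1 + |(n : ℝ)|) ^ (q * (-β)))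
    exact h.2 hsum
  have hMq : Summable fun n : ℤ => (‖M (n₀ - n)‖ * (1 + |(n : ℝ)|) ^ (-β)) ^ q := by
    have hγ0 : 0 ≤ q * β := mul_nonneg hq0.le hβ
    refine Summable.of_nonneg_of_le (fun n => by positivity) (fun n => ?_)
      (hsum'.mul_left ((1 + |(n₀ : ℝ)|) ^ (q * β)))
    have hb : 1 + |((n₀ - n : ℤ) : ℝ)| ≤ (1 + |(n₀ : ℝ)|) * (1 + |(n : ℝ)|) := by
      push_cast
      have := Stmt9Aux.base_abs (n₀ : ℝ) (-(n : ℝ))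
      simpa [sub_eq_add_neg, abs_neg] using this
    have hbr : (1 + |((n₀ - n : ℤ) : ℝ)|) ^ (q * β)
        ≤ (1 + |(n₀ : ℝ)|) ^ (q * β) * (1 + |(n : ℝ)|) ^ (q * β) := by
      rw [← Real.mul_rpow (Stmt9Aux.base_pos n₀).le (Stmt9Aux.base_pos n).le]
      exact Real.rpow_le_rpow (Stmt9Aux.base_pos _).le hb hγ0
    have hinv : ((1 + |(n : ℝ)|) ^ (q * β))⁻¹
        ≤ (1 + |(n₀ : ℝ)|) ^ (q * β) * ((1 + |((n₀ - n : ℤ) : ℝ)|) ^ (q * β))⁻¹ :=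
      Stmt9Aux.inv_le_mul_inv (Stmt9Aux.w_pos _ _) (Stmt9Aux.w_pos _ _) hbr
    have e1 : ((1 + |(n : ℝ)|) ^ (-β)) ^ q = ((1 + |(n : ℝ)|) ^ (q * β))⁻¹ := by
      rw [← Real.rpow_mul (Stmt9Aux.base_pos n).le, show -β * q = -(q * β) by ring,
        Real.rpow_neg (Stmt9Aux.base_pos n).le]
    have e2 : (1 + |((n₀ - n : ℤ) : ℝ)|) ^ (q * (-β))
        = ((1 + |((n₀ - n : ℤ) : ℝ)|) ^ (q * β))⁻¹ := by
      rw [show q * (-β) = -(q * β) by ring, Real.rpow_neg (Stmt9Aux.base_pos _).le]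
    calc (‖M (n₀ - n)‖ * (1 + |(n : ℝ)|) ^ (-β)) ^ q
        = ‖M (n₀ - n)‖ ^ q * ((1 + |(n : ℝ)|) ^ (-β)) ^ q :=
          Real.mul_rpow (norm_nonneg _) (Real.rpow_nonneg (Stmt9Aux.base_pos n).le _)
      _ = ‖M (n₀ - n)‖ ^ q * ((1 + |(n : ℝ)|) ^ (q * β))⁻¹ := by rw [e1]
      _ ≤ ‖M (n₀ - n)‖ ^ q
            * ((1 + |(n₀ : ℝ)|) ^ (q * β) * ((1 + |((n₀ - n : ℤ) : ℝ)|) ^ (q * β))⁻¹) :=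
          mul_le_mul_of_nonneg_left hinv (Real.rpow_nonneg (norm_nonneg _) _)
      _ = (1 + |(n₀ : ℝ)|) ^ (q * β)
            * (‖M (n₀ - n)‖ ^ q * (1 + |((n₀ - n : ℤ) : ℝ)|) ^ (q * (-β))) := by
          rw [e2]; ring
  -- the dual norm constant
  set Cq : ℝ := (∑' n : ℤ, (‖M (n₀ - n)‖ * (1 + |(n : ℝ)|) ^ (-β)) ^ q) ^ (1 / q) with hCqdef
  have hCq0 : 0 ≤ Cq := by
    rw [hCqdef]
    exact Real.rpow_nonneg (tsum_nonneg fun n => by positivity) _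
  have hCq1 : (0:ℝ) < Cq + 1 := by linarith
  obtain ⟨a, haF, hlt⟩ := hcyc (‖M n₀‖ / (Cq + 1)) (div_pos hn₀' hCq1)
  set g : ℤ → ℂ := fun n => (if n = 0 then 1 else 0) - convSeq a c n with hgdef
  have hconv : ∀ n : ℤ, convSeq a c n = ∑ k ∈ haF.toFinset, a k * c (n - k) := by
    intro n
    apply tsum_eq_sum
    intro k hk
    have hk0 : a k = 0 := by
      by_contra h
      exact hk (haF.mem_toFinset.2 h)
    rw [hk0, zero_mul]
  -- shifted summability of c
  have hshiftc : ∀ k : ℤ, Summable fun n : ℤ => ‖c (n - k)‖ * (1 + |((n - k : ℤ) : ℝ)|) ^ β := by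
    intro k
    have h := (Equiv.subRight k).summable_iff
      (f := fun n : ℤ => ‖c n‖ * (1 + |(n : ℝ)|) ^ β)
    exact h.2 hc1w
  have hshiftc1 : ∀ k : ℤ, Summable fun n : ℤ => ‖c (n - k)‖ := by
    intro k
    have h := (Equiv.subRight k).summable_iff (f := fun n : ℤ => ‖c n‖)
    exact h.2 hc1
  -- g ∈ ℓ¹_β
  have hgl1 : Summable fun n : ℤ => ‖g n‖ * (1 + |(n : ℝ)|) ^ β := by
    have hδ : Summable fun n : ℤ => (if n = 0 then (1:ℝ) else 0) * (1 + |(n : ℝ)|) ^ β := by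
      apply summable_of_ne_finset_zero (s := ({0} : Finset ℤ))
      intro n hn
      rw [if_neg (by simpa using hn), zero_mul]
    have hF : Summable fun n : ℤ => ∑ k ∈ haF.toFinset,
        (‖a k‖ * (1 + |(k : ℝ)|) ^ β) * (‖c (n - k)‖ * (1 + |((n - k : ℤ) : ℝ)|) ^ β) :=
      summable_sum fun k _ => (hshiftc k).mul_left _
    refine Summable.of_nonneg_of_le (fun n => by positivity) (fun n => ?_) (hδ.add hF)
    have hg_n : ‖g n‖ ≤ (if n = 0 then (1:ℝ) else 0) + ∑ k ∈ haF.toFinset, ‖a k‖ * ‖c (n - k)‖ := by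
      rw [hgdef]
      refine le_trans (norm_sub_le _ _) (add_le_add ?_ ?_)
      · split_ifs <;> simp
      · rw [hconv n]
        refine le_trans (norm_sum_le _ _) ?_
        apply le_of_eq
        apply Finset.sum_congr rfl
        intro k _
        exact norm_mul _ _
    calc ‖g n‖ * (1 + |(n : ℝ)|) ^ β
        ≤ ((if n = 0 then (1:ℝ) else 0) + ∑ k ∈ haF.toFinset, ‖a k‖ * ‖c (n - k)‖)
            * (1 + |(n : ℝ)|) ^ β :=
          mul_le_mul_of_nonneg_right hg_n (Stmt9Aux.w_pos _ _).le
      _ = (if n = 0 then (1:ℝ) else 0) * (1 + |(n : ℝ)|) ^ β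
            + ∑ k ∈ haF.toFinset, (‖a k‖ * ‖c (n - k)‖) * (1 + |(n : ℝ)|) ^ β := by
          rw [add_mul, Finset.sum_mul]
      _ ≤ (if n = 0 then (1:ℝ) else 0) * (1 + |(n : ℝ)|) ^ β
            + ∑ k ∈ haF.toFinset,
              (‖a k‖ * (1 + |(k : ℝ)|) ^ β) * (‖c (n - k)‖ * (1 + |((n - k : ℤ) : ℝ)|) ^ β) := by
          apply add_le_add_right
          apply Finset.sum_le_sum
          intro k _
          have hwsub : (1 + |(n : ℝ)|) ^ β
              ≤ (1 + |(k : ℝ)|) ^ β * (1 + |((n - k : ℤ) : ℝ)|) ^ β := by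
            rw [← Real.mul_rpow (Stmt9Aux.base_pos k).le (Stmt9Aux.base_pos _).le]
            apply Real.rpow_le_rpow (Stmt9Aux.base_pos n).le ?_ hβ
            push_cast
            have := Stmt9Aux.base_abs (k : ℝ) ((n : ℝ) - k)
            simpa using this
          calc (‖a k‖ * ‖c (n - k)‖) * (1 + |(n : ℝ)|) ^ β
              ≤ (‖a k‖ * ‖c (n - k)‖) * ((1 + |(k : ℝ)|) ^ β * (1 + |((n - k : ℤ) : ℝ)|) ^ β) :=
                mul_le_mul_of_nonneg_left hwsub (by positivity)
            _ = (‖a k‖ * (1 + |(k : ℝ)|) ^ β) * (‖c (n - k)‖ * (1 + |((n - k : ℤ) : ℝ)|) ^ β) := by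
                ring
  have hgp : Summable fun n : ℤ => (‖g n‖ * (1 + |(n : ℝ)|) ^ β) ^ p :=
    Stmt9Aux.l1_to_lp (fun n => by positivity) hgl1 hp
  -- Hölder
  have holder := Real.summable_and_inner_le_Lp_mul_Lq_tsum_of_nonneg
    (f := fun n : ℤ => ‖g n‖ * (1 + |(n : ℝ)|) ^ β)
    (g := fun n : ℤ => ‖M (n₀ - n)‖ * (1 + |(n : ℝ)|) ^ (-β))
    hpq (fun n => by positivity) (fun n => by positivity) hgp hMq
  have hpt : ∀ n : ℤ, (‖g n‖ * (1 + |(n : ℝ)|) ^ β) * (‖M (n₀ - n)‖ * (1 + |(n : ℝ)|) ^ (-β))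
      = ‖g n * M (n₀ - n)‖ := by
    intro n
    have hone : (1 + |(n : ℝ)|) ^ β * (1 + |(n : ℝ)|) ^ (-β) = 1 := by
      rw [← Real.rpow_add (Stmt9Aux.base_pos n)]
      simp
    rw [norm_mul]
    calc (‖g n‖ * (1 + |(n : ℝ)|) ^ β) * (‖M (n₀ - n)‖ * (1 + |(n : ℝ)|) ^ (-β))
        = ‖g n‖ * ‖M (n₀ - n)‖ * ((1 + |(n : ℝ)|) ^ β * (1 + |(n : ℝ)|) ^ (-β)) := by ring
      _ = ‖g n‖ * ‖M (n₀ - n)‖ := by rw [hone, mul_one]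
  have hnormsum : Summable fun n : ℤ => ‖g n * M (n₀ - n)‖ := (summable_congr hpt).1 holder.1
  have hsumgM : Summable fun n : ℤ => g n * M (n₀ - n) := Summable.of_norm hnormsum
  have htsumle : ∑' n : ℤ, ‖g n * M (n₀ - n)‖ ≤ normA p β g * Cq := by
    rw [show (∑' n : ℤ, ‖g n * M (n₀ - n)‖)
        = ∑' n : ℤ, (‖g n‖ * (1 + |(n : ℝ)|) ^ β) * (‖M (n₀ - n)‖ * (1 + |(n : ℝ)|) ^ (-β))
      from tsum_congr fun n => (hpt n).symm]
    refine le_trans holder.2 (le_of_eq ?_)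
    congr 1
    rw [normA, wSum]
    congr 1
    apply tsum_congr
    intro n
    rw [Real.mul_rpow (norm_nonneg _) (Stmt9Aux.w_pos _ _).le,
      ← Real.rpow_mul (Stmt9Aux.base_pos n).le, mul_comm β p]
  -- computation of the pairing
  have hδsum : Summable fun n : ℤ => (if n = 0 then (1:ℂ) else 0) * M (n₀ - n) := by
    apply summable_of_ne_finset_zero (s := ({0} : Finset ℤ))
    intro n hn
    rw [if_neg (by simpa using hn), zero_mul]
  have hconvsum : Summable fun n : ℤ => convSeq a c n * M (n₀ - n) := by
    refine Summable.congr (hδsum.sub hsumgM) fun n => ?_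
    rw [hgdef]
    ring
  have hconv0 : ∑' n : ℤ, convSeq a c n * M (n₀ - n) = 0 := by
    have hk : ∀ k ∈ haF.toFinset, Summable fun n : ℤ => a k * (c (n - k) * M (n₀ - n)) := by
      intro k _
      apply Summable.mul_left
      apply Summable.of_norm
      refine Summable.of_nonneg_of_le (fun n => norm_nonneg _) (fun n => ?_)
        ((hshiftc1 k).mul_right B)
      rw [norm_mul]
      exact mul_le_mul_of_nonneg_left (hMB _) (norm_nonneg _)
    calc ∑' n : ℤ, convSeq a c n * M (n₀ - n)
        = ∑' n : ℤ, ∑ k ∈ haF.toFinset, a k * (c (n - k) * M (n₀ - n)) := by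
          apply tsum_congr
          intro n
          rw [hconv n, Finset.sum_mul]
          apply Finset.sum_congr rfl
          intro k _
          ring
      _ = ∑ k ∈ haF.toFinset, ∑' n : ℤ, a k * (c (n - k) * M (n₀ - n)) := Summable.tsum_finsetSum hk
      _ = 0 := by
          apply Finset.sum_eq_zero
          intro k _
          rw [tsum_mul_left]
          have hre : ∑' n : ℤ, c (n - k) * M (n₀ - n) = ∑' j : ℤ, c j * M ((n₀ - k) - j) := by
            rw [← (Equiv.addRight k).tsum_eq (fun n => c (n - k) * M (n₀ - n))]
            apply tsum_congr
            intro j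
            simp only [Equiv.coe_addRight]
            rw [add_sub_cancel_right, show n₀ - (j + k) = (n₀ - k) - j by ring]
          rw [hre, Stmt9Aux.vanishM hc1 μ₁ μ₂ μ₃ μ₄ hs1 hs2 hs3 hs4 (n₀ - k), mul_zero]
  have hΛ : ∑' n : ℤ, g n * M (n₀ - n) = M n₀ := by
    calc ∑' n : ℤ, g n * M (n₀ - n)
        = ∑' n : ℤ, ((if n = 0 then (1:ℂ) else 0) * M (n₀ - n)
            - convSeq a c n * M (n₀ - n)) := by
          apply tsum_congr
          intro n
          rw [hgdef]
          ring
      _ = (∑' n : ℤ, (if n = 0 then (1:ℂ) else 0) * M (n₀ - n))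
            - ∑' n : ℤ, convSeq a c n * M (n₀ - n) := Summable.tsum_sub hδsum hconvsum
      _ = M n₀ := by
          rw [hconv0, sub_zero, tsum_eq_single 0 (fun n hn => by rw [if_neg hn, zero_mul])]
          simp
  -- conclusion
  have hnA0 : 0 ≤ normA p β g :=
    Real.rpow_nonneg (tsum_nonneg fun n => by positivity) _
  have hcontr : ‖M n₀‖ < ‖M n₀‖ := by
    calc ‖M n₀‖ = ‖∑' n : ℤ, g n * M (n₀ - n)‖ := by rw [hΛ]
      _ ≤ ∑' n : ℤ, ‖g n * M (n₀ - n)‖ := norm_tsum_le_tsum_norm hnormsum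
      _ ≤ normA p β g * Cq := htsumle
      _ ≤ normA p β g * (Cq + 1) := mul_le_mul_of_nonneg_left (by linarith) hnA0
      _ < (‖M n₀‖ / (Cq + 1)) * (Cq + 1) := mul_lt_mul_of_pos_right hlt hCq1
      _ = ‖M n₀‖ := div_mul_cancel₀ _ hCq1.ne'
  exact lt_irrefl _ hcontr


end
end

section
/- Let 0 ≤ β < 1/2. For every continuously differentiable function g : 𝕋 → ℂ one has ∑_{n∈ℤ} |ĝ(n)| (1+|n|)^β ≤ ‖g‖_∞ + 2 √((2−2β)/(1−2β)) ‖g'‖_∞, where ĝ(n) denotes the n-th Fourier coefficient of g and ‖·‖_∞ denotes the supremum norm on 𝕋. -/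
open MeasureTheory Real Set Filter Topology ENNReal

noncomputable section

lemma aux_natsum {β : ℝ} (hβ0 : 0 ≤ β) (hβ : β < 1 / 2) :
    Summable (fun k : ℕ => ((k : ℝ) + 1) ^ (2 * β - 2)) ∧
    ∑' k : ℕ, ((k : ℝ) + 1) ^ (2 * β - 2) ≤ (2 - 2 * β) / (1 - 2 * β) := by
  have hs : 2 * β - 2 < -1 := by linarith
  have hsum : Summable (fun k : ℕ => ((k : ℝ) + 1) ^ (2 * β - 2)) := by
    have h0 := Real.summable_nat_rpow.mpr hs
    have h1 := (summable_nat_add_iff (f := fun n : ℕ => (n : ℝ) ^ (2 * β - 2)) 1).mpr h0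
    refine h1.congr fun k => ?_
    push_cast
    ring_nf
  refine ⟨hsum, Summable.tsum_le_of_sum_le hsum ?_⟩
  intro u
  obtain ⟨N, hN⟩ := u.exists_nat_subset_range
  have hsub : u ⊆ Finset.range (N + 1) :=
    hN.trans (Finset.range_subset_range.mpr (Nat.le_succ N))
  have hnn : ∀ k : ℕ, 0 ≤ ((k : ℝ) + 1) ^ (2 * β - 2) := fun k =>
    Real.rpow_nonneg (by positivity) _
  refine le_trans (Finset.sum_le_sum_of_subset_of_nonneg hsub fun i _ _ => hnn i) ?_
  -- main bound for range (N+1)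
  have hanti : AntitoneOn (fun x : ℝ => x ^ (2 * β - 2)) (Icc (1 : ℝ) (1 + N)) := by
    intro x hx y hy hxy
    exact Real.rpow_le_rpow_of_nonpos (lt_of_lt_of_le one_pos hx.1) hxy (by linarith)
  have hint := hanti.sum_le_integral
  have hI : (∫ x in (1:ℝ)..1 + N, x ^ (2 * β - 2)) ≤ 1 / (1 - 2 * β) := by
    have hN0 : (0:ℝ) ≤ (N:ℝ) := Nat.cast_nonneg N
    have h0m : (0:ℝ) ∉ Set.uIcc (1:ℝ) (1 + N) := by
      rw [Set.uIcc_of_le (by linarith : (1:ℝ) ≤ 1 + N)]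
      rintro ⟨h1, h2⟩
      linarith
    rw [integral_rpow (Or.inr ⟨by linarith, h0m⟩)]
    rw [Real.one_rpow]
    have hX : (0:ℝ) ≤ (1 + (N:ℝ)) ^ (2 * β - 2 + 1) := Real.rpow_nonneg (by positivity) _
    have heq : ((1 + (N:ℝ)) ^ (2 * β - 2 + 1) - 1) / (2 * β - 2 + 1)
        = (1 - (1 + (N:ℝ)) ^ (2 * β - 2 + 1)) / (1 - 2 * β) := by
      rw [div_eq_div_iff (by linarith) (by linarith)]
      ring
    rw [heq]
    exact div_le_div_of_nonneg_right (by linarith) (by linarith) |>.trans_eq rfl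
  calc ∑ k ∈ Finset.range (N + 1), ((k : ℝ) + 1) ^ (2 * β - 2)
      = (∑ i ∈ Finset.range N, (((i:ℝ) + 1) + 1) ^ (2 * β - 2)) + 1 := by
        rw [Finset.sum_range_succ']
        norm_num
    _ ≤ (1 / (1 - 2 * β)) + 1 := by
        have hterm : ∀ i ∈ Finset.range N,
            (((i:ℝ) + 1) + 1) ^ (2 * β - 2)
              = (fun x : ℝ => x ^ (2 * β - 2)) (1 + (i + 1 : ℕ)) := by
          intro i _
          show _ = (1 + ((i + 1 : ℕ) : ℝ)) ^ (2 * β - 2)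
          congr 1
          push_cast
          ring
        rw [Finset.sum_congr rfl hterm]
        have := hint.trans hI
        linarith
    _ = (2 - 2 * β) / (1 - 2 * β) := by
        have hden : (1 - 2 * β) ≠ 0 := by linarith
        field_simp
        ring

lemma aux_intsum {β : ℝ} (hβ0 : 0 ≤ β) (hβ : β < 1 / 2) :
    Summable (fun n : ℤ => if n = 0 then (0:ℝ) else ((1 + |(n : ℝ)|) ^ β / |(n : ℝ)|) ^ 2) ∧
    ∑' n : ℤ, (if n = 0 then (0:ℝ) else ((1 + |(n : ℝ)|) ^ β / |(n : ℝ)|) ^ 2)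
      ≤ 4 * ((2 - 2 * β) / (1 - 2 * β)) := by
  obtain ⟨hns, hnb⟩ := aux_natsum hβ0 hβ
  set b : ℤ → ℝ := fun n => if n = 0 then (0:ℝ) else ((1 + |(n : ℝ)|) ^ β / |(n : ℝ)|) ^ 2
    with hbdef
  set v : ℤ → ℝ := fun n => if n = 0 then (0:ℝ) else 2 * |(n : ℝ)| ^ (2 * β - 2) with hvdef
  have hb0 : ∀ n, 0 ≤ b n := by
    intro n; rw [hbdef]; dsimp only; split <;> positivity
  have hbv : ∀ n : ℤ, b n ≤ v n := by
    intro n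
    by_cases hn : n = 0
    · simp [hbdef, hvdef, hn]
    · rw [hbdef, hvdef]
      simp only [hn, if_false]
      set x := |(n : ℝ)| with hxdef
      have hx1 : (1:ℝ) ≤ x := by
        rw [hxdef, ← Int.cast_abs]
        exact_mod_cast Int.one_le_abs hn
      have hx0 : (0:ℝ) < x := lt_of_lt_of_le one_pos hx1
      rw [div_pow, div_le_iff₀ (by positivity)]
      have h1 : ((1 + x) ^ β) ^ 2 = (1 + x) ^ (2 * β) := by
        rw [sq, ← Real.rpow_add (by linarith)]
        congr 1; ring
      have h2 : x ^ (2 * β - 2) * (x ^ 2 : ℝ) = x ^ (2 * β) := by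
        rw [← Real.rpow_natCast x 2, ← Real.rpow_add hx0]
        norm_num
      calc ((1 + x) ^ β) ^ 2 = (1 + x) ^ (2 * β) := h1
        _ ≤ (2 * x) ^ (2 * β) := Real.rpow_le_rpow (by linarith) (by linarith) (by linarith)
        _ = 2 ^ (2 * β) * x ^ (2 * β) := Real.mul_rpow (by norm_num) hx0.le
        _ ≤ 2 * x ^ (2 * β) := by
            have h3 : (2:ℝ) ^ (2 * β) ≤ 2 ^ (1:ℝ) :=
              Real.rpow_le_rpow_of_exponent_le one_le_two (by linarith)
            rw [Real.rpow_one] at h3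
            exact mul_le_mul_of_nonneg_right h3 (Real.rpow_nonneg hx0.le _)
        _ = 2 * x ^ (2 * β - 2) * x ^ 2 := by rw [mul_assoc, h2]
  -- positive and negative parts of v
  have hshift : (fun k : ℕ => v (k + 1 : ℕ)) = fun k : ℕ => 2 * ((k : ℝ) + 1) ^ (2 * β - 2) := by
    funext k
    rw [hvdef]
    have : ((k : ℤ) + 1) ≠ 0 := by positivity
    simp only [Nat.cast_add, Nat.cast_one, this, if_false]
    push_cast
    rw [abs_of_nonneg (by positivity)]
  have hpos : Summable (fun k : ℕ => v k) := by
    refine (summable_nat_add_iff 1).mp ?_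
    rw [hshift]
    exact hns.mul_left 2
  have hpostsum : ∑' k : ℕ, v k ≤ 2 * ((2 - 2 * β) / (1 - 2 * β)) := by
    rw [Summable.tsum_eq_zero_add hpos]
    have h0 : v ((0:ℕ):ℤ) = 0 := by simp [hvdef]
    rw [h0, zero_add]
    have : (fun k : ℕ => v (↑(k + 1))) = fun k : ℕ => 2 * ((k : ℝ) + 1) ^ (2 * β - 2) := hshift
    calc ∑' k : ℕ, v (↑(k + 1)) = ∑' k : ℕ, 2 * ((k : ℝ) + 1) ^ (2 * β - 2) := by rw [this]
      _ = 2 * ∑' k : ℕ, ((k : ℝ) + 1) ^ (2 * β - 2) := tsum_mul_left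
      _ ≤ 2 * ((2 - 2 * β) / (1 - 2 * β)) := by
          have h2b : (0:ℝ) ≤ 2 := by norm_num
          exact mul_le_mul_of_nonneg_left hnb h2b
  have hnegeq : (fun k : ℕ => v (-(k + 1))) = fun k : ℕ => 2 * ((k : ℝ) + 1) ^ (2 * β - 2) := by
    funext k
    rw [hvdef]
    have : (-(k + 1) : ℤ) ≠ 0 := by
      intro h
      omega
    simp only [this, if_false]
    push_cast
    rw [abs_neg, abs_of_nonneg (by positivity)]
  have hneg : Summable (fun k : ℕ => v (-(k + 1))) := by
    rw [hnegeq]; exact hns.mul_left 2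
  have hnegtsum : ∑' k : ℕ, v (-(k + 1)) ≤ 2 * ((2 - 2 * β) / (1 - 2 * β)) := by
    rw [hnegeq, tsum_mul_left]
    exact mul_le_mul_of_nonneg_left hnb (by norm_num)
  have hvsum : Summable v := Summable.of_nat_of_neg_add_one hpos hneg
  have hvtsum : ∑' n : ℤ, v n ≤ 4 * ((2 - 2 * β) / (1 - 2 * β)) := by
    rw [tsum_of_nat_of_neg_add_one hpos hneg]
    linarith
  have hbsum : Summable b := Summable.of_nonneg_of_le hb0 hbv hvsum
  exact ⟨hbsum, le_trans (Summable.tsum_le_tsum hbv hbsum hvsum) hvtsum⟩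

/-- inequality (2.2): for `0 ≤ β < 1/2` and every `C¹`
function `g` on `𝕋 = ℝ/2πℤ`,
`∑_{n∈ℤ} |ĝ(n)| (1+|n|)^β ≤ ‖g‖_∞ + 2 √((2-2β)/(1-2β)) ‖g'‖_∞`. -/
theorem stmt18 (β : ℝ) (hβ0 : 0 ≤ β) (hβ : β < 1 / 2)
    (g : AddCircle (2 * Real.pi) → ℂ)
    (hg : ContDiff ℝ 1 fun x : ℝ => g (↑x)) :
    Summable (fun n : ℤ => ‖fourierCoeff g n‖ * (1 + |(n : ℝ)|) ^ β) ∧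
    ∑' n : ℤ, ‖fourierCoeff g n‖ * (1 + |(n : ℝ)|) ^ β
      ≤ (⨆ t : AddCircle (2 * Real.pi), ‖g t‖)
        + 2 * Real.sqrt ((2 - 2 * β) / (1 - 2 * β))
          * (⨆ x : ℝ, ‖deriv (fun y : ℝ => g (↑y)) x‖) := by
  have hπ : (0:ℝ) < 2 * Real.pi := by positivity
  set G : ℝ → ℂ := fun x : ℝ => g (↑x) with hG
  set M' : ℝ := ⨆ x : ℝ, ‖deriv G x‖ with hM'
  set M : ℝ := ⨆ t : AddCircle (2 * Real.pi), ‖g t‖ with hM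
  have hGc : Continuous G := hg.continuous
  have hGper : Function.Periodic G (2 * Real.pi) := by
    intro x
    rw [hG]
    show g _ = g _
    congr 1
    exact AddCircle.coe_add_period (2 * Real.pi) x
  set G' : ℝ → ℂ := deriv G with hG'
  have hG'c : Continuous G' := hg.continuous_deriv le_rfl
  have hGd : ∀ x, HasDerivAt G (G' x) x := fun x =>
    ((hg.differentiable one_ne_zero) x).hasDerivAt
  have hG'per : Function.Periodic G' (2 * Real.pi) := by
    intro x
    have h1 : deriv (fun y => G (y + 2 * Real.pi)) x = deriv G (x + 2 * Real.pi) :=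
      deriv_comp_add_const G (2 * Real.pi) x
    rw [hG', ← h1]
    congr 1
    exact funext hGper
  -- representatives
  have hrep : ∀ t : AddCircle (2 * Real.pi),
      ∃ x : ℝ, x ∈ Set.Ico (0:ℝ) (0 + 2 * Real.pi) ∧ ((x : ℝ) : AddCircle (2 * Real.pi)) = t := by
    intro t
    induction t using QuotientAddGroup.induction_on with
    | H y =>
      refine ⟨toIcoMod hπ 0 y, toIcoMod_mem_Ico hπ 0 y, ?_⟩
      have h := toIcoMod_add_toIcoDiv_zsmul hπ 0 y
      have hz : ((toIcoDiv hπ 0 y • (2 * Real.pi) : ℝ) : AddCircle (2 * Real.pi)) = 0 :=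
        (QuotientAddGroup.eq_zero_iff _).mpr (AddSubgroup.zsmul_mem_zmultiples _ _)
      conv_rhs => rw [← h]
      rw [QuotientAddGroup.mk_add, hz, add_zero]
  have hgeq : g = AddCircle.liftIco (2 * Real.pi) 0 G := by
    funext t
    obtain ⟨x, hx, rfl⟩ := hrep t
    rw [AddCircle.liftIco_coe_apply hx]
  set g' : AddCircle (2 * Real.pi) → ℂ := AddCircle.liftIco (2 * Real.pi) 0 G' with hg'def
  have hG'ends : G' 0 = G' (2 * Real.pi) := by
    have := hG'per 0
    rw [zero_add] at this
    exact this.symm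
  have hg'cont : Continuous g' := AddCircle.liftIco_zero_continuous hG'ends hG'c.continuousOn
  have hgcont : Continuous g := by
    rw [hgeq]
    refine AddCircle.liftIco_zero_continuous ?_ hGc.continuousOn
    have := hGper 0
    rw [zero_add] at this
    exact this.symm
  have hab : (0:ℝ) < 0 + 2 * Real.pi := by linarith
  have hcoeffg : ∀ n : ℤ, fourierCoeff g n = fourierCoeffOn hab G n := by
    intro n
    rw [hgeq]
    exact fourierCoeff_liftIco_eq G n
  have hcoeffg' : ∀ n : ℤ, fourierCoeff g' n = fourierCoeffOn hab G' n := by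
    intro n
    rw [hg'def]
    exact fourierCoeff_liftIco_eq G' n
  -- key derivative relation
  have hkey : ∀ n : ℤ, n ≠ 0 →
      ‖fourierCoeff g n‖ = ‖fourierCoeff g' n‖ / |(n : ℝ)| := by
    intro n hn
    have h₁ := fourierCoeffOn_of_hasDerivAt hab hn
      (fun x _ => hGd x) (hG'c.intervalIntegrable 0 (0 + 2 * Real.pi))
    have hGp : G (0 + 2 * Real.pi) - G 0 = 0 := by rw [hGper 0, sub_self]
    rw [hcoeffg n, hcoeffg' n, h₁, hGp, mul_zero, zero_sub, norm_mul, norm_neg, norm_mul]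
    have hn' : (0:ℝ) < |(n:ℝ)| :=
      abs_pos.mpr (Int.cast_ne_zero.mpr hn)
    have hz : ‖(1:ℂ) / (-2 * ↑Real.pi * Complex.I * (n:ℂ))‖ = 1 / (2 * Real.pi * |(n:ℝ)|) := by
      rw [norm_div, norm_one]
      congr 1
      simp [abs_of_pos Real.pi_pos]
    rw [hz]
    have hc : ‖((0 + 2 * Real.pi : ℝ) : ℂ) - ((0:ℝ):ℂ)‖ = 2 * Real.pi := by
      simp [abs_of_pos Real.pi_pos]
    rw [hc]
    field_simp
  -- boundedness of G' and g'
  have hbdd' : BddAbove (Set.range fun x : ℝ => ‖G' x‖) := by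
    have hcomp : IsCompact ((fun x : ℝ => ‖G' x‖) '' Set.Icc 0 (2 * Real.pi)) :=
      isCompact_Icc.image hG'c.norm
    refine BddAbove.mono ?_ hcomp.bddAbove
    rintro r ⟨x, rfl⟩
    obtain ⟨y, hy, hxy⟩ := hG'per.exists_mem_Ico₀ hπ x
    exact ⟨y, Set.Ico_subset_Icc_self hy, by simp only []; rw [hxy]⟩
  have hub' : ∀ x : ℝ, ‖G' x‖ ≤ M' := fun x => le_ciSup hbdd' x
  have hM'0 : 0 ≤ M' := le_trans (norm_nonneg _) (hub' 0)
  have hubg' : ∀ t, ‖g' t‖ ≤ M' := by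
    intro t
    obtain ⟨x, hx, rfl⟩ := hrep t
    rw [hg'def, AddCircle.liftIco_coe_apply hx]
    exact hub' x
  -- boundedness of g
  have hbddg : BddAbove (Set.range fun t => ‖g t‖) :=
    (isCompact_range hgcont.norm).bddAbove
  have hubg : ∀ t, ‖g t‖ ≤ M := fun t => le_ciSup hbddg t
  have hM0 : 0 ≤ M := le_trans (norm_nonneg _) (hubg 0)
  -- zeroth coefficient
  have h0 : ‖fourierCoeff g 0‖ ≤ M := by
    rw [fourierCoeff]
    calc ‖∫ t : AddCircle (2 * Real.pi), fourier (-0) t • g t ∂AddCircle.haarAddCircle‖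
        ≤ M * (AddCircle.haarAddCircle Set.univ).toReal := by
          refine norm_integral_le_of_norm_le_const (ae_of_all _ fun t => ?_)
          simp only [neg_zero, fourier_zero, one_smul]
          exact hubg t
      _ = M := by simp
  -- Parseval
  have hsumA : Summable (fun n : ℤ => ‖fourierCoeff g' n‖ ^ 2) := by
    have h := (lp.memℓp (fourierBasis.repr
      (ContinuousMap.toLp 2 AddCircle.haarAddCircle ℂ ⟨g', hg'cont⟩))).summable
      (by norm_num : 0 < (2:ℝ≥0∞).toReal)
    refine h.congr fun n => ?_
    rw [fourierBasis_repr, fourierCoeff_toLp]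
    show ‖fourierCoeff (⟨g', hg'cont⟩ : C(AddCircle (2 * Real.pi), ℂ)) n‖ ^ (2:ℝ≥0∞).toReal = _
    rw [ENNReal.toReal_ofNat]
    rw [Real.rpow_two]
    rfl
  have hA : ∑' n : ℤ, ‖fourierCoeff g' n‖ ^ 2 ≤ M' ^ 2 := by
    have hP := tsum_sq_fourierCoeff (ContinuousMap.toLp 2 AddCircle.haarAddCircle ℂ ⟨g', hg'cont⟩)
    simp_rw [fourierCoeff_toLp] at hP
    have hae : (fun t => ‖(ContinuousMap.toLp 2 AddCircle.haarAddCircle ℂ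
        (⟨g', hg'cont⟩ : C(AddCircle (2 * Real.pi), ℂ)) : Lp ℂ 2 AddCircle.haarAddCircle) t‖ ^ 2)
        =ᵐ[AddCircle.haarAddCircle] fun t => ‖g' t‖ ^ 2 := by
      filter_upwards [ContinuousMap.coeFn_toLp (p := 2) (μ := AddCircle.haarAddCircle) (𝕜 := ℂ)
        (⟨g', hg'cont⟩ : C(AddCircle (2 * Real.pi), ℂ))] with t ht
      rw [ht]
      rfl
    rw [integral_congr_ae hae] at hP
    have hcoe : (fun n : ℤ => ‖fourierCoeff
        (⇑(⟨g', hg'cont⟩ : C(AddCircle (2 * Real.pi), ℂ))) n‖ ^ 2)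
        = fun n : ℤ => ‖fourierCoeff g' n‖ ^ 2 := rfl
    rw [hcoe] at hP
    rw [hP]
    have hint : Integrable (fun t => ‖g' t‖ ^ 2) AddCircle.haarAddCircle := by
      refine Continuous.integrable_of_hasCompactSupport (by fun_prop) ?_
      exact IsCompact.of_isClosed_subset isCompact_univ (isClosed_tsupport _) (Set.subset_univ _)
    calc ∫ t, ‖g' t‖ ^ 2 ∂AddCircle.haarAddCircle
        ≤ ∫ _t, M' ^ 2 ∂AddCircle.haarAddCircle := by
          refine integral_mono hint (integrable_const _) fun t => ?_
          exact pow_le_pow_left₀ (norm_nonneg _) (hubg' t) 2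
      _ = M' ^ 2 := by simp
  -- weight sum
  obtain ⟨hbsum, hbts⟩ := aux_intsum hβ0 hβ
  set b : ℤ → ℝ := fun n => if n = 0 then (0:ℝ) else ((1 + |(n : ℝ)|) ^ β / |(n : ℝ)|) ^ 2
    with hbdef
  have hb0 : ∀ n, 0 ≤ b n := by
    intro n; rw [hbdef]; dsimp only; split <;> positivity
  set D : ℝ := (2 - 2 * β) / (1 - 2 * β) with hD
  have hD0 : 0 ≤ D := by
    rw [hD]
    apply div_nonneg <;> linarith
  have hsqrt4 : Real.sqrt (4 * D) = 2 * Real.sqrt D := by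
    rw [show (4:ℝ) * D = 2 ^ 2 * D by ring, Real.sqrt_mul (by positivity) D,
      Real.sqrt_sq (by norm_num : (0:ℝ) ≤ 2)]
  set F : ℤ → ℝ := fun n => ‖fourierCoeff g n‖ * (1 + |(n : ℝ)|) ^ β with hF
  have hF0 : ∀ n, 0 ≤ F n := by
    intro n; rw [hF]; positivity
  have hFbound : ∀ s : Finset ℤ, ∑ n ∈ s, F n ≤ M + 2 * Real.sqrt D * M' := by
    intro s
    have step1 : ∑ n ∈ s, F n ≤ F 0 + ∑ n ∈ s.erase 0, F n := by
      have hsub : s ⊆ insert 0 (s.erase 0) := by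
        intro n hn
        by_cases h : n = 0
        · simp [h]
        · exact Finset.mem_insert_of_mem (Finset.mem_erase.mpr ⟨h, hn⟩)
      calc ∑ n ∈ s, F n ≤ ∑ n ∈ insert 0 (s.erase 0), F n :=
            Finset.sum_le_sum_of_subset_of_nonneg hsub (fun i _ _ => hF0 i)
        _ = F 0 + ∑ n ∈ s.erase 0, F n := Finset.sum_insert (Finset.notMem_erase 0 s)
    have hF0M : F 0 ≤ M := by
      rw [hF]
      show ‖fourierCoeff g 0‖ * (1 + |((0:ℤ) : ℝ)|) ^ β ≤ M
      simp only [Int.cast_zero, abs_zero, add_zero, Real.one_rpow]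
      simpa using h0
    have hCS : ∑ n ∈ s.erase 0, F n
        ≤ Real.sqrt (∑ n ∈ s.erase 0, ‖fourierCoeff g' n‖ ^ 2)
          * Real.sqrt (∑ n ∈ s.erase 0, b n) := by
      have hterm : ∀ n ∈ s.erase 0,
          F n = Real.sqrt (‖fourierCoeff g' n‖ ^ 2) * Real.sqrt (b n) := by
        intro n hn
        have hn0 : n ≠ 0 := (Finset.mem_erase.mp hn).1
        have hnabs : (0:ℝ) < |(n:ℝ)| := abs_pos.mpr (Int.cast_ne_zero.mpr hn0)
        rw [hF, hbdef]
        show ‖fourierCoeff g n‖ * (1 + |(n : ℝ)|) ^ β = _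
        simp only [hn0, if_false]
        rw [Real.sqrt_sq (norm_nonneg _), Real.sqrt_sq (by positivity)]
        rw [hkey n hn0]
        field_simp
      rw [Finset.sum_congr rfl hterm]
      exact Real.sum_sqrt_mul_sqrt_le _ (fun i => sq_nonneg _) (fun i => hb0 i)
    have hs1 : Real.sqrt (∑ n ∈ s.erase 0, ‖fourierCoeff g' n‖ ^ 2) ≤ M' := by
      have h1 : ∑ n ∈ s.erase 0, ‖fourierCoeff g' n‖ ^ 2 ≤ M' ^ 2 :=
        le_trans (Summable.sum_le_tsum _ (fun i _ => sq_nonneg _) hsumA) hA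
      calc Real.sqrt (∑ n ∈ s.erase 0, ‖fourierCoeff g' n‖ ^ 2)
          ≤ Real.sqrt (M' ^ 2) := Real.sqrt_le_sqrt h1
        _ = M' := Real.sqrt_sq hM'0
    have hs2 : Real.sqrt (∑ n ∈ s.erase 0, b n) ≤ 2 * Real.sqrt D := by
      have h2 : ∑ n ∈ s.erase 0, b n ≤ 4 * D :=
        le_trans (Summable.sum_le_tsum _ (fun i _ => hb0 i) hbsum) hbts
      calc Real.sqrt (∑ n ∈ s.erase 0, b n) ≤ Real.sqrt (4 * D) := Real.sqrt_le_sqrt h2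
        _ = 2 * Real.sqrt D := hsqrt4
    have hprod : Real.sqrt (∑ n ∈ s.erase 0, ‖fourierCoeff g' n‖ ^ 2)
        * Real.sqrt (∑ n ∈ s.erase 0, b n) ≤ M' * (2 * Real.sqrt D) :=
      mul_le_mul hs1 hs2 (Real.sqrt_nonneg _) hM'0
    calc ∑ n ∈ s, F n ≤ F 0 + ∑ n ∈ s.erase 0, F n := step1
      _ ≤ M + M' * (2 * Real.sqrt D) := add_le_add hF0M (hCS.trans hprod)
      _ = M + 2 * Real.sqrt D * M' := by ring
  have hFsummable : Summable F := summable_of_sum_le hF0 hFbound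
  exact ⟨hFsummable, Summable.tsum_le_of_sum_le hFsummable hFbound⟩

end
end

section
/- Let 1 ≤ r, s < ∞ and β, γ ∈ ℝ. (1) If r ≤ s, then ℓ^r_β(ℤ) ⊆ ℓ^s_γ(ℤ) if and only if γ ≤ β. (2) If r > s, then ℓ^r_β(ℤ) ⊆ ℓ^s_γ(ℤ) if and only if β − γ > 1/s − 1/r. -/
/-!
With `v n = ‖u n‖ * (1 + |n|) ^ β`, membership in `ℓ^r_β` says `v ∈ ℓ^r`, and membership in
`ℓ^s_γ` says `v * (1 + |n|) ^ (γ - β) ∈ ℓ^s`. For `r ≤ s` the inclusion `ℓ^r ⊆ ℓ^s` and the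
monotonicity of the weight give the inclusion when `γ ≤ β`. For `s < r`, Hölder's inequality with
`1/s = 1/r + 1/t` reduces it to `(1 + |n|) ^ (γ - β) ∈ ℓ^t`, i.e. `t (β - γ) > 1`.

Sharpness: if `β < γ`, the sequence `(1 + |n|) ^ (-γ)` restricted to the powers of `2` lies in
`ℓ^r_β` but not in `ℓ^s_γ`. At the critical gap `β - γ ≤ 1/s - 1/r` the sequence
`(1 + |n|) ^ (-β - 1/r) * (1 + log₂ |n|) ^ (-1/s)` is a counterexample, by Cauchy condensation for
`∑ 1 / (n (log n) ^ a)`.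
-/

open MeasureTheory Real Set Filter Topology ENNReal

noncomputable section

/-- Membership in `ℓ^p_β(ℤ)`: `∑_{n∈ℤ} |u_n|^p (1+|n|)^{pβ} < ∞`. -/
def MemL (p β : ℝ) (u : ℤ → ℂ) : Prop :=
  Summable fun n : ℤ => ‖u n‖ ^ p * (1 + |(n : ℝ)|) ^ (p * β)

theorem summable_int_natAbs_iff {G : Type*} [AddCommGroup G] [UniformSpace G]
    [IsUniformAddGroup G] [CompleteSpace G] {F : ℕ → G} :
    (Summable fun n : ℤ => F n.natAbs) ↔ Summable F := by
  simp [summable_int_iff_summable_nat_and_neg]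

theorem summable_one_add_natCast_rpow_iff {c : ℝ} :
    Summable (fun k : ℕ => (1 + k : ℝ) ^ c) ↔ c < -1 := by
  rw [← summable_nat_rpow, ← summable_nat_add_iff (f := fun k : ℕ => (k : ℝ) ^ c) 1]
  simp [add_comm]

theorem summable_one_add_abs_intCast_rpow {c : ℝ} (hc : c < -1) :
    Summable (fun n : ℤ => (1 + |(n : ℝ)|) ^ c) := by
  simpa using summable_int_natAbs_iff.mpr (summable_one_add_natCast_rpow_iff.mpr hc)

theorem summable_one_add_two_pow_rpow {c : ℝ} (hc : c < 0) :
    Summable (fun k : ℕ => (1 + 2 ^ k : ℝ) ^ c) := by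
  have hratio : (2 : ℝ) ^ c < 1 := rpow_lt_one_of_one_lt_of_neg one_lt_two hc
  refine (summable_geometric_of_lt_one (by positivity) hratio).of_nonneg_of_le
    (fun k => by positivity) fun k => ?_
  calc (1 + 2 ^ k : ℝ) ^ c ≤ ((2 : ℝ) ^ k) ^ c :=
        rpow_le_rpow_of_nonpos (by positivity) (by linarith) hc.le
    _ = (2 ^ c) ^ k := by
        rw [← Real.rpow_natCast, ← Real.rpow_natCast, ← rpow_mul zero_le_two,
          ← rpow_mul zero_le_two, mul_comm]

theorem summable_inv_mul_one_add_log_rpow_iff {a : ℝ} (ha : 0 ≤ a) :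
    Summable (fun k : ℕ => (1 + k : ℝ)⁻¹ * (1 + Nat.log 2 k : ℝ) ^ (-a)) ↔ 1 < a := by
  -- `Nat.log 2` rather than `Real.log` makes the condensed series explicit.
  set φ := fun k : ℕ => (1 + k : ℝ)⁻¹ * (1 + Nat.log 2 k : ℝ) ^ (-a)
  have hφ_anti : ∀ ⦃m n : ℕ⦄, 0 < m → m ≤ n → φ n ≤ φ m := by
    intro m n _ hmn
    have hmn' : (m : ℝ) ≤ n := by exact_mod_cast hmn
    have hlog : (Nat.log 2 m : ℝ) ≤ Nat.log 2 n := by exact_mod_cast Nat.log_mono_right hmn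
    exact mul_le_mul (inv_anti₀ (by positivity) (by linarith))
      (rpow_le_rpow_of_nonpos (by positivity) (by linarith) (by linarith)) (by positivity)
      (by positivity)
  have hcondensed :
      ∀ k : ℕ, (2 : ℝ) ^ k * φ (2 ^ k) = 2 ^ k / (1 + 2 ^ k) * (1 + k : ℝ) ^ (-a) := by
    intro k
    simp only [φ, Nat.log_pow one_lt_two]
    push_cast
    ring
  rw [← summable_condensed_iff_of_nonneg (fun k => by positivity) hφ_anti, funext hcondensed,
    ← neg_lt_neg_iff, ← summable_one_add_natCast_rpow_iff]
  constructor
  · intro h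
    refine (h.mul_left 2).of_nonneg_of_le (fun k => by positivity) fun k => ?_
    have : (1 : ℝ) ≤ 2 * (2 ^ k / (1 + 2 ^ k)) := by
      rw [← mul_div_assoc, le_div_iff₀ (by positivity)]
      linarith [one_le_pow₀ (M₀ := ℝ) one_le_two (n := k)]
    calc (1 + k : ℝ) ^ (-a) = 1 * (1 + k : ℝ) ^ (-a) := (one_mul _).symm
      _ ≤ 2 * (2 ^ k / (1 + 2 ^ k)) * (1 + k : ℝ) ^ (-a) := by gcongr
      _ = _ := by ring
  · intro h
    refine h.of_nonneg_of_le (fun k => by positivity) fun k => ?_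
    have : (2 : ℝ) ^ k / (1 + 2 ^ k) ≤ 1 := by
      rw [div_le_one (by positivity)]; linarith
    calc 2 ^ k / (1 + 2 ^ k) * (1 + k : ℝ) ^ (-a) ≤ 1 * (1 + k : ℝ) ^ (-a) := by gcongr
      _ = _ := one_mul _

theorem memL_iff_summable_mul_rpow {p β : ℝ} {u : ℤ → ℂ} :
    MemL p β u ↔ Summable fun n : ℤ => (‖u n‖ * (1 + |(n : ℝ)|) ^ β) ^ p := by
  refine summable_congr fun n => ?_
  rw [mul_rpow (norm_nonneg _) (by positivity), ← Real.rpow_mul (by positivity), mul_comm β p]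

theorem memL_ofReal_iff {p β : ℝ} {x : ℤ → ℝ} (hx : ∀ n, 0 ≤ x n) :
    MemL p β (fun n => (x n : ℂ)) ↔ Summable fun n : ℤ => (x n * (1 + |(n : ℝ)|) ^ β) ^ p := by
  simp only [memL_iff_summable_mul_rpow, Complex.norm_real, norm_eq_abs, abs_of_nonneg (hx _)]

theorem MemL.of_exponent_le {r s β : ℝ} {u : ℤ → ℂ} (hr : 0 < r) (hrs : r ≤ s)
    (hu : MemL r β u) : MemL s β u := by
  set f : ℤ → ℝ := fun n => ‖u n‖ * (1 + |(n : ℝ)|) ^ β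
  have memℓp_iff : ∀ p : ℝ, 0 < p → (Memℓp f (ENNReal.ofReal p) ↔ MemL p β u) := by
    intro p hp
    rw [memℓp_gen_iff (by rwa [ENNReal.toReal_ofReal hp.le]), memL_iff_summable_mul_rpow,
      ENNReal.toReal_ofReal hp.le]
    refine summable_congr fun n => ?_
    rw [norm_of_nonneg (by positivity)]
  exact (memℓp_iff s (hr.trans_le hrs)).mp
    (((memℓp_iff r hr).mpr hu).of_exponent_ge (ENNReal.ofReal_le_ofReal hrs))

theorem MemL.of_weight_le {s β γ : ℝ} {u : ℤ → ℂ} (hs : 0 ≤ s) (hγβ : γ ≤ β)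
    (hu : MemL s β u) : MemL s γ u :=
  hu.of_nonneg_of_le (fun n => by positivity) fun n =>
    mul_le_mul_of_nonneg_left (rpow_le_rpow_of_exponent_le (le_add_of_nonneg_right (abs_nonneg _))
      (mul_le_mul_of_nonneg_left hγβ hs)) (by positivity)

theorem MemL.of_exponent_gt {r s β γ : ℝ} {u : ℤ → ℂ} (hs : 0 < s) (hsr : s < r)
    (hgap : 1 / s - 1 / r < β - γ) (hu : MemL r β u) : MemL s γ u := by
  set t := (1 / s - 1 / r)⁻¹
  have ht : 0 < t := inv_pos.mpr (by rw [sub_pos]; gcongr)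
  have hrts : r.HolderTriple t s :=
    ⟨by simp only [t, inv_inv]; ring, hs.trans hsr, ht⟩
  have hweight : Summable fun n : ℤ => ((1 + |(n : ℝ)|) ^ (γ - β)) ^ t := by
    have hexp : (γ - β) * t < -1 := by
      rw [← lt_div_iff₀ ht, div_eq_mul_inv, inv_inv]
      linarith
    refine (summable_one_add_abs_intCast_rpow hexp).congr fun n => ?_
    rw [Real.rpow_mul (by positivity)]
  rw [memL_iff_summable_mul_rpow] at hu ⊢
  refine (Real.summable_Lr_of_Lp_Lq_of_nonneg hrts (fun n => by positivity)
    (fun n => by positivity) hu hweight).congr fun n => ?_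
  rw [mul_assoc, ← Real.rpow_add (by positivity), add_sub_cancel]

theorem exists_memL_not_memL_of_weight_lt {r s β γ : ℝ} (hr : 0 < r) (hs : 0 < s) (hβγ : β < γ) :
    ∃ u : ℤ → ℂ, MemL r β u ∧ ¬ MemL s γ u := by
  set g : ℕ → ℤ := fun k => 2 ^ k
  have hg : Function.Injective g := pow_right_injective₀ (by norm_num) (by norm_num)
  set x : ℤ → ℝ := (range g).indicator fun n => (1 + |(n : ℝ)|) ^ (-γ)
  have hx : ∀ n, 0 ≤ x n := fun n => indicator_nonneg (fun n _ => by positivity) n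
  have memL_iff : ∀ {p θ : ℝ}, p ≠ 0 →
      (MemL p θ (fun n => (x n : ℂ)) ↔
        Summable fun k : ℕ => (1 + 2 ^ k : ℝ) ^ ((θ - γ) * p)) := by
    intro p θ hp
    rw [memL_ofReal_iff hx, ← hg.summable_iff fun n hn => by simp [x, hn, zero_rpow hp]]
    refine summable_congr fun k => ?_
    simp only [Function.comp, x, g, indicator_of_mem (mem_range_self k)]
    push_cast
    rw [abs_of_nonneg (by positivity), ← Real.rpow_add (by positivity),
      ← Real.rpow_mul (by positivity), neg_add_eq_sub]
  refine ⟨_, (memL_iff hr.ne').mpr (summable_one_add_two_pow_rpow ?_), fun h => ?_⟩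
  · nlinarith
  · rw [memL_iff hs.ne', sub_self, zero_mul] at h
    simp only [Real.rpow_zero, summable_const_iff] at h
    exact one_ne_zero h

theorem exists_memL_not_memL_of_weight_gap_le {r s β γ : ℝ} (hs : 0 < s) (hsr : s < r)
    (hgap : β - γ ≤ 1 / s - 1 / r) : ∃ u : ℤ → ℂ, MemL r β u ∧ ¬ MemL s γ u := by
  have hr : 0 < r := hs.trans hsr
  set x : ℤ → ℝ := fun n =>
    (1 + |(n : ℝ)|) ^ (-β - r⁻¹) * (1 + Nat.log 2 n.natAbs : ℝ) ^ (-s⁻¹)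
  have hx : ∀ n, 0 ≤ x n := fun n => by positivity
  have memL_iff : ∀ p θ : ℝ, MemL p θ (fun n => (x n : ℂ)) ↔
      Summable fun k : ℕ =>
        (1 + k : ℝ) ^ ((θ - β - r⁻¹) * p) * (1 + Nat.log 2 k : ℝ) ^ (-s⁻¹ * p) := by
    intro p θ
    rw [memL_ofReal_iff hx, ← summable_int_natAbs_iff]
    refine summable_congr fun n => ?_
    rw [Nat.cast_natAbs, Int.cast_abs, mul_right_comm, ← Real.rpow_add (by positivity),
      mul_rpow (by positivity) (by positivity), ← Real.rpow_mul (by positivity),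
      ← Real.rpow_mul (by positivity)]
    ring_nf
  refine ⟨_, (memL_iff r β).mpr ?_, fun h => ?_⟩
  · have hexp : (β - β - r⁻¹) * r = -1 := by field_simp; ring
    rw [hexp, show -s⁻¹ * r = -(r / s) by ring]
    simp only [Real.rpow_neg_one]
    exact (summable_inv_mul_one_add_log_rpow_iff (by positivity)).mpr ((one_lt_div hs).mpr hsr)
  · rw [memL_iff, show -s⁻¹ * s = -1 by field_simp] at h
    have hexp : -1 ≤ (γ - β - r⁻¹) * s :=
      calc -1 = -(s * (1 / s - 1 / r)) - s * r⁻¹ := by field_simp; ring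
        _ ≤ -(s * (β - γ)) - s * r⁻¹ := by gcongr
        _ = (γ - β - r⁻¹) * s := by ring
    refine lt_irrefl (1 : ℝ) ((summable_inv_mul_one_add_log_rpow_iff zero_le_one).mp
      (h.of_nonneg_of_le (fun k => by positivity) fun k => ?_))
    rw [← Real.rpow_neg_one]
    gcongr
    exact le_add_of_nonneg_right k.cast_nonneg

/-- Lemma 2.1: for `1 ≤ r, s < ∞` and `β, γ ∈ ℝ`:
(1) if `r ≤ s` then `ℓ^r_β(ℤ) ⊆ ℓ^s_γ(ℤ)` iff `γ ≤ β`;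
(2) if `r > s` then `ℓ^r_β(ℤ) ⊆ ℓ^s_γ(ℤ)` iff `β - γ > 1/s - 1/r`. -/
theorem stmt19 (r s β γ : ℝ) (hr : 1 ≤ r) (hs : 1 ≤ s) :
    (r ≤ s →
      ((∀ u : ℤ → ℂ, MemL r β u → MemL s γ u) ↔ γ ≤ β)) ∧
    (s < r →
      ((∀ u : ℤ → ℂ, MemL r β u → MemL s γ u) ↔ 1 / s - 1 / r < β - γ)) := by
  have hr0 : 0 < r := by linarith
  have hs0 : 0 < s := by linarith
  refine ⟨fun hrs => ⟨fun hincl => ?_, fun hγβ u hu => ?_⟩,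
    fun hsr => ⟨fun hincl => ?_, fun hgap u hu => ?_⟩⟩
  · by_contra! hβγ
    obtain ⟨u, hu, hnot⟩ := exists_memL_not_memL_of_weight_lt hr0 hs0 hβγ
    exact hnot (hincl u hu)
  · exact (hu.of_exponent_le hr0 hrs).of_weight_le hs0.le hγβ
  · by_contra! hgap
    obtain ⟨u, hu, hnot⟩ := exists_memL_not_memL_of_weight_gap_le hs0 hsr hgap
    exact hnot (hincl u hu)
  · exact hu.of_exponent_gt hs0 hsr hgap

end
end
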